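/- arXiv:1906.07472 — 2 statements merged into one kernel-verified Lean document; each statement's English description precedes it below -/
import Mathlib

section
/- Let n ≥ 2, d ≥ 1 and let ρ : sVV_n → Mat_d(ℂ) be a calibrated representation with ρ(y_1) = 0. Suppose that for every 1 ≤ i ≤ n−1 and all indices ℓ ≠ m, the matrix entry (ρ(e_i))_{ℓ,m} is nonzero if and only if (ρ(s_i))_{ℓ,m} is nonzero. Then every diagonal entry of every ρ(s_i) equals +1 or −1, and for all 1 ≤ j ≤ n−1 and all 1 ≤ m ≤ d one has (ρ(y_{j+1}))_{m,m} = (ρ(y_j))_{m,m} + (ρ(s_j))_{m,m}; consequently (ρ(y_{j+1}))_{m,m} = Σ_{a=1}^{j} (ρ(s_a))_{m,m}, a sum of j terms each equal to ±1. -/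
/-!
Fix `i` and write `S, E, Y, Y'` for the images of `s_i, e_i, y_i, y_{i+1}`, with `Y, Y'`
diagonal. Adding the diagonal entries of the two relations (VV7) gives
`S_mm (Y_mm - Y'_mm) = -1`. By (VV8), a nonzero entry `E_mk` forces `Y_mm - Y'_mm = 1` while a
nonzero `E_km` forces `Y_mm - Y'_mm = -1`; since `E` and `S` have the same off-diagonal support,
`S_mk S_km = 0` for `k ≠ m`, so the diagonal entry of `S² = 1` reads `S_mm² = 1`. Hence
`S_mm = ±1` and `Y'_mm = Y_mm + S_mm`; summing from `y_1 = 0` gives the closed formula.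
-/

noncomputable section

namespace Periplectic

/-- Generators of the degenerate affine periplectic Brauer algebra on `n` strands:
`S i` for `1 ≤ i ≤ n-1`, `E i` for `1 ≤ i ≤ n-1`, `Y j` for `1 ≤ j ≤ n`. -/
inductive Gen (n : ℕ) : Type
  | S (i : ℕ) (h : 1 ≤ i ∧ i ≤ n - 1) : Gen n
  | E (i : ℕ) (h : 1 ≤ i ∧ i ≤ n - 1) : Gen n
  | Y (j : ℕ) (h : 1 ≤ j ∧ j ≤ n) : Gen n

/-- The free `ℂ`-algebra on the generators. -/
abbrev FA (n : ℕ) : Type := FreeAlgebra ℂ (Gen n)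

def fS (n i : ℕ) (h : 1 ≤ i ∧ i ≤ n - 1) : FA n := FreeAlgebra.ι ℂ (Gen.S i h)
def fE (n i : ℕ) (h : 1 ≤ i ∧ i ≤ n - 1) : FA n := FreeAlgebra.ι ℂ (Gen.E i h)
def fY (n j : ℕ) (h : 1 ≤ j ∧ j ≤ n) : FA n := FreeAlgebra.ι ℂ (Gen.Y j h)

/-- The defining relations of the degenerate affine periplectic Brauer algebra. -/
inductive Rel (n : ℕ) : FA n → FA n → Prop
  /- (VV1)  s_i² = 1 -/
  | s_sq (i : ℕ) (h : 1 ≤ i ∧ i ≤ n - 1) :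
      Rel n (fS n i h * fS n i h) 1
  /- (VV2)(i)  s_i e_j = e_j s_i for |i-j| > 1 -/
  | se_comm (i j : ℕ) (hi : 1 ≤ i ∧ i ≤ n - 1) (hj : 1 ≤ j ∧ j ≤ n - 1)
      (hij : i + 1 < j ∨ j + 1 < i) :
      Rel n (fS n i hi * fE n j hj) (fE n j hj * fS n i hi)
  /- (VV2)(ii)  e_i e_j = e_j e_i for |i-j| > 1 -/
  | ee_comm (i j : ℕ) (hi : 1 ≤ i ∧ i ≤ n - 1) (hj : 1 ≤ j ∧ j ≤ n - 1)
      (hij : i + 1 < j ∨ j + 1 < i) :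
      Rel n (fE n i hi * fE n j hj) (fE n j hj * fE n i hi)
  /- (VV2)(iii)  e_i y_j = y_j e_i for j ∉ {i, i+1} -/
  | ey_comm (i j : ℕ) (hi : 1 ≤ i ∧ i ≤ n - 1) (hj : 1 ≤ j ∧ j ≤ n)
      (hij : j ≠ i ∧ j ≠ i + 1) :
      Rel n (fE n i hi * fY n j hj) (fY n j hj * fE n i hi)
  /- (VV2)(iv)  y_i y_j = y_j y_i -/
  | yy_comm (i j : ℕ) (hi : 1 ≤ i ∧ i ≤ n) (hj : 1 ≤ j ∧ j ≤ n) :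
      Rel n (fY n i hi * fY n j hj) (fY n j hj * fY n i hi)
  /- (VV3)(i)  s_i s_j = s_j s_i for |i-j| > 1 -/
  | ss_comm (i j : ℕ) (hi : 1 ≤ i ∧ i ≤ n - 1) (hj : 1 ≤ j ∧ j ≤ n - 1)
      (hij : i + 1 < j ∨ j + 1 < i) :
      Rel n (fS n i hi * fS n j hj) (fS n j hj * fS n i hi)
  /- (VV3)(ii)  braid relation -/
  | braid (i : ℕ) (hi : 1 ≤ i ∧ i ≤ n - 1) (hi1 : 1 ≤ i + 1 ∧ i + 1 ≤ n - 1) :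
      Rel n (fS n i hi * fS n (i+1) hi1 * fS n i hi)
            (fS n (i+1) hi1 * fS n i hi * fS n (i+1) hi1)
  /- (VV3)(iii)  s_i y_j = y_j s_i for j ∉ {i, i+1} -/
  | sy_comm (i j : ℕ) (hi : 1 ≤ i ∧ i ≤ n - 1) (hj : 1 ≤ j ∧ j ≤ n)
      (hij : j ≠ i ∧ j ≠ i + 1) :
      Rel n (fS n i hi * fY n j hj) (fY n j hj * fS n i hi)
  /- (VV4)(i)  e_{i+1} e_i e_{i+1} = -e_{i+1} -/
  | eee_up (i : ℕ) (hi : 1 ≤ i ∧ i ≤ n - 1) (hi1 : 1 ≤ i + 1 ∧ i + 1 ≤ n - 1) :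
      Rel n (fE n (i+1) hi1 * fE n i hi * fE n (i+1) hi1) (-(fE n (i+1) hi1))
  /- (VV4)(ii)  e_i e_{i+1} e_i = -e_i -/
  | eee_down (i : ℕ) (hi : 1 ≤ i ∧ i ≤ n - 1) (hi1 : 1 ≤ i + 1 ∧ i + 1 ≤ n - 1) :
      Rel n (fE n i hi * fE n (i+1) hi1 * fE n i hi) (-(fE n i hi))
  /- (VV5)(i)  e_i s_i = e_i  and  s_i e_i = -e_i -/
  | es (i : ℕ) (hi : 1 ≤ i ∧ i ≤ n - 1) :
      Rel n (fE n i hi * fS n i hi) (fE n i hi)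
  | se (i : ℕ) (hi : 1 ≤ i ∧ i ≤ n - 1) :
      Rel n (fS n i hi * fE n i hi) (-(fE n i hi))
  /- (VV5)(ii)  s_i e_{i+1} e_i = s_{i+1} e_i -/
  | see (i : ℕ) (hi : 1 ≤ i ∧ i ≤ n - 1) (hi1 : 1 ≤ i + 1 ∧ i + 1 ≤ n - 1) :
      Rel n (fS n i hi * fE n (i+1) hi1 * fE n i hi) (fS n (i+1) hi1 * fE n i hi)
  /- (VV5)(iii)  s_{i+1} e_i e_{i+1} = -s_i e_{i+1} -/
  | see' (i : ℕ) (hi : 1 ≤ i ∧ i ≤ n - 1) (hi1 : 1 ≤ i + 1 ∧ i + 1 ≤ n - 1) :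
      Rel n (fS n (i+1) hi1 * fE n i hi * fE n (i+1) hi1) (-(fS n i hi * fE n (i+1) hi1))
  /- (VV5)(iv)  e_{i+1} e_i s_{i+1} = e_{i+1} s_i -/
  | ees (i : ℕ) (hi : 1 ≤ i ∧ i ≤ n - 1) (hi1 : 1 ≤ i + 1 ∧ i + 1 ≤ n - 1) :
      Rel n (fE n (i+1) hi1 * fE n i hi * fS n (i+1) hi1) (fE n (i+1) hi1 * fS n i hi)
  /- (VV5)(v)  e_i e_{i+1} s_i = -e_i s_{i+1} -/
  | ees' (i : ℕ) (hi : 1 ≤ i ∧ i ≤ n - 1) (hi1 : 1 ≤ i + 1 ∧ i + 1 ≤ n - 1) :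
      Rel n (fE n i hi * fE n (i+1) hi1 * fS n i hi) (-(fE n i hi * fS n (i+1) hi1))
  /- (VV6)  e_i² = 0 -/
  | e_sq (i : ℕ) (hi : 1 ≤ i ∧ i ≤ n - 1) :
      Rel n (fE n i hi * fE n i hi) 0
  /- (VV7)(i)  s_i y_i - y_{i+1} s_i = -e_i - 1 -/
  | sy_rel (i : ℕ) (hi : 1 ≤ i ∧ i ≤ n - 1) (hyi : 1 ≤ i ∧ i ≤ n)
      (hyi1 : 1 ≤ i + 1 ∧ i + 1 ≤ n) :
      Rel n (fS n i hi * fY n i hyi - fY n (i+1) hyi1 * fS n i hi) (-(fE n i hi) - 1)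
  /- (VV7)(ii)  y_i s_i - s_i y_{i+1} = e_i - 1 -/
  | ys_rel (i : ℕ) (hi : 1 ≤ i ∧ i ≤ n - 1) (hyi : 1 ≤ i ∧ i ≤ n)
      (hyi1 : 1 ≤ i + 1 ∧ i + 1 ≤ n) :
      Rel n (fY n i hyi * fS n i hi - fS n i hi * fY n (i+1) hyi1) (fE n i hi - 1)
  /- (VV8)(i)  e_i (y_i - y_{i+1}) = -e_i -/
  | e_ydiff (i : ℕ) (hi : 1 ≤ i ∧ i ≤ n - 1) (hyi : 1 ≤ i ∧ i ≤ n)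
      (hyi1 : 1 ≤ i + 1 ∧ i + 1 ≤ n) :
      Rel n (fE n i hi * (fY n i hyi - fY n (i+1) hyi1)) (-(fE n i hi))
  /- (VV8)(ii)  (y_i - y_{i+1}) e_i = e_i -/
  | ydiff_e (i : ℕ) (hi : 1 ≤ i ∧ i ≤ n - 1) (hyi : 1 ≤ i ∧ i ≤ n)
      (hyi1 : 1 ≤ i + 1 ∧ i + 1 ≤ n) :
      Rel n ((fY n i hyi - fY n (i+1) hyi1) * fE n i hi) (fE n i hi)

/-- The degenerate affine periplectic Brauer algebra `sVV n`. -/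
abbrev sVV (n : ℕ) : Type := RingQuot (Rel n)

/-- The generator `s_i` of `sVV n`. -/
def sgen (n i : ℕ) (h : 1 ≤ i ∧ i ≤ n - 1) : sVV n :=
  RingQuot.mkAlgHom ℂ (Rel n) (fS n i h)

/-- The generator `e_i` of `sVV n`. -/
def egen (n i : ℕ) (h : 1 ≤ i ∧ i ≤ n - 1) : sVV n :=
  RingQuot.mkAlgHom ℂ (Rel n) (fE n i h)

/-- The generator `y_j` of `sVV n`. -/
def ygen (n j : ℕ) (h : 1 ≤ j ∧ j ≤ n) : sVV n :=
  RingQuot.mkAlgHom ℂ (Rel n) (fY n j h)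

/-- Total version of `s_i` (equal to `sgen n i _` when `1 ≤ i ≤ n-1`, and `0` otherwise). -/
def ss (n i : ℕ) : sVV n := if h : 1 ≤ i ∧ i ≤ n - 1 then sgen n i h else 0

/-- Total version of `e_i`. -/
def ee (n i : ℕ) : sVV n := if h : 1 ≤ i ∧ i ≤ n - 1 then egen n i h else 0

/-- Total version of `y_j`. -/
def yy (n j : ℕ) : sVV n := if h : 1 ≤ j ∧ j ≤ n then ygen n j h else 0


/-- A calibrated representation of `sVV n` of dimension `d`: a unital `ℂ`-algebra homomorphism
to `d × d` matrices under which every `y_j` acts by a diagonal matrix. -/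
def IsCalibrated {n d : ℕ} (ρ : sVV n →ₐ[ℂ] Matrix (Fin d) (Fin d) ℂ) : Prop :=
  ∀ j : ℕ, 1 ≤ j → j ≤ n → (ρ (yy n j)).IsDiag

/-- Indecomposability of a matrix representation of `sVV n`: there is no direct sum
decomposition `ℂ^d = U ⊕ W` with `U, W` nonzero subspaces invariant under all `ρ a`. -/
def IsIndecomposableRep {n d : ℕ} (ρ : sVV n →ₐ[ℂ] Matrix (Fin d) (Fin d) ℂ) : Prop :=
  ¬ ∃ U W : Submodule ℂ (Fin d → ℂ), U ≠ ⊥ ∧ W ≠ ⊥ ∧ IsCompl U W ∧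
      (∀ a : sVV n, ∀ x ∈ U, (ρ a).mulVec x ∈ U) ∧
      (∀ a : sVV n, ∀ x ∈ W, (ρ a).mulVec x ∈ W)

end Periplectic

namespace Matrix

variable {ι R : Type*} [Fintype ι]

theorem IsDiag.mul_right_apply [NonUnitalNonAssocSemiring R] {D : Matrix ι ι R} (hD : D.IsDiag)
    (A : Matrix ι ι R) (k m : ι) : (A * D) k m = A k m * D m m := by
  rw [mul_apply]
  exact Finset.sum_eq_single m (fun j _ hj => by rw [hD hj, mul_zero])
    (fun h => absurd (Finset.mem_univ m) h)

theorem IsDiag.mul_left_apply [NonUnitalNonAssocSemiring R] {D : Matrix ι ι R} (hD : D.IsDiag)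
    (A : Matrix ι ι R) (k m : ι) : (D * A) k m = D k k * A k m := by
  rw [mul_apply]
  exact Finset.sum_eq_single k (fun j _ hj => by rw [hD hj.symm, zero_mul])
    (fun h => absurd (Finset.mem_univ k) h)

theorem diag_mul_self_eq_one [NonAssocSemiring R] [DecidableEq ι] {S : Matrix ι ι R}
    (hS : S * S = 1) (hoff : ∀ k m, k ≠ m → S m k * S k m = 0) (m : ι) :
    S m m * S m m = 1 := by
  have h := congrFun (congrFun hS m) m
  rwa [mul_apply, Finset.sum_eq_single m (fun k _ hk => hoff k m hk)
    (fun h => absurd (Finset.mem_univ m) h), one_apply_eq] at h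

end Matrix

namespace Periplectic

section LocalRelations

variable {ι K : Type*} [Fintype ι] [Field K] [NeZero (2 : K)]
  {S E Y Y' : Matrix ι ι K}

theorem diag_mul_sub_diag_eq_neg_one [DecidableEq ι] (hY : Y.IsDiag) (hY' : Y'.IsDiag)
    (hsy : S * Y - Y' * S = -E - 1) (hys : Y * S - S * Y' = E - 1) (m : ι) :
    S m m * (Y m m - Y' m m) = -1 := by
  have hsy_mm := congrFun (congrFun hsy m) m
  have hys_mm := congrFun (congrFun hys m) m
  simp only [Matrix.sub_apply, Matrix.neg_apply, Matrix.one_apply_eq, hY.mul_right_apply,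
    hY.mul_left_apply, hY'.mul_right_apply, hY'.mul_left_apply] at hsy_mm hys_mm
  refine mul_left_cancel₀ (two_ne_zero : (2 : K) ≠ 0) ?_
  linear_combination hsy_mm + hys_mm

theorem apply_mul_apply_eq_zero_of_ne (hY : Y.IsDiag) (hY' : Y'.IsDiag)
    (hey : E * (Y - Y') = -E) (hye : (Y - Y') * E = E)
    (hes : ∀ k m, k ≠ m → (E k m ≠ 0 ↔ S k m ≠ 0)) {k m : ι} (hkm : k ≠ m) :
    S m k * S k m = 0 := by
  by_contra hne
  have hEmk : E m k ≠ 0 := (hes m k hkm.symm).mpr (left_ne_zero_of_mul hne)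
  have hEkm : E k m ≠ 0 := (hes k m hkm).mpr (right_ne_zero_of_mul hne)
  have hΔ : (Y - Y').IsDiag := hY.sub hY'
  have h_one : (Y - Y') m m = 1 := by
    have h := congrFun (congrFun hye m) k
    rw [hΔ.mul_left_apply] at h
    exact mul_right_cancel₀ hEmk (h.trans (one_mul _).symm)
  have h_neg_one : (Y - Y') m m = -1 := by
    have h := congrFun (congrFun hey k) m
    rw [hΔ.mul_right_apply, Matrix.neg_apply] at h
    exact mul_left_cancel₀ hEkm (h.trans (mul_neg_one _).symm)
  apply (two_ne_zero : (2 : K) ≠ 0)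
  linear_combination h_neg_one - h_one

theorem diag_eq_one_or_neg_one_and_diag_add [DecidableEq ι] (hY : Y.IsDiag) (hY' : Y'.IsDiag)
    (hS : S * S = 1) (hsy : S * Y - Y' * S = -E - 1) (hys : Y * S - S * Y' = E - 1)
    (hey : E * (Y - Y') = -E) (hye : (Y - Y') * E = E)
    (hes : ∀ k m, k ≠ m → (E k m ≠ 0 ↔ S k m ≠ 0)) (m : ι) :
    (S m m = 1 ∨ S m m = -1) ∧ Y' m m = Y m m + S m m := by
  have hsq := Matrix.diag_mul_self_eq_one hS
    (fun _ _ hkm => apply_mul_apply_eq_zero_of_ne hY hY' hey hye hes hkm) m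
  have hprod := diag_mul_sub_diag_eq_neg_one hY hY' hsy hys m
  exact ⟨mul_self_eq_one_iff.mp hsq,
    by linear_combination (Y m m - Y' m m) * hsq - S m m * hprod⟩

end LocalRelations

section GeneratorRelations

variable {n i : ℕ}

theorem ss_eq_mkAlgHom (h : 1 ≤ i ∧ i ≤ n - 1) :
    ss n i = RingQuot.mkAlgHom ℂ (Rel n) (fS n i h) :=
  dif_pos h

theorem ee_eq_mkAlgHom (h : 1 ≤ i ∧ i ≤ n - 1) :
    ee n i = RingQuot.mkAlgHom ℂ (Rel n) (fE n i h) :=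
  dif_pos h

theorem yy_eq_mkAlgHom (h : 1 ≤ i ∧ i ≤ n) : yy n i = RingQuot.mkAlgHom ℂ (Rel n) (fY n i h) :=
  dif_pos h

theorem ss_mul_self (hi : 1 ≤ i) (hin : i ≤ n - 1) : ss n i * ss n i = 1 := by
  rw [ss_eq_mkAlgHom ⟨hi, hin⟩, ← map_mul, RingQuot.mkAlgHom_rel ℂ (Rel.s_sq i ⟨hi, hin⟩), map_one]

theorem ss_mul_yy_sub_yy_mul_ss (hi : 1 ≤ i) (hin : i ≤ n - 1) :
    ss n i * yy n i - yy n (i + 1) * ss n i = -ee n i - 1 := by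
  have hy : 1 ≤ i ∧ i ≤ n := ⟨hi, by omega⟩
  have hy' : 1 ≤ i + 1 ∧ i + 1 ≤ n := ⟨by omega, by omega⟩
  rw [ss_eq_mkAlgHom ⟨hi, hin⟩, ee_eq_mkAlgHom ⟨hi, hin⟩, yy_eq_mkAlgHom hy, yy_eq_mkAlgHom hy',
    ← map_mul, ← map_mul, ← map_sub,
    RingQuot.mkAlgHom_rel ℂ (Rel.sy_rel i ⟨hi, hin⟩ hy hy'), map_sub, map_neg, map_one]

theorem yy_mul_ss_sub_ss_mul_yy (hi : 1 ≤ i) (hin : i ≤ n - 1) :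
    yy n i * ss n i - ss n i * yy n (i + 1) = ee n i - 1 := by
  have hy : 1 ≤ i ∧ i ≤ n := ⟨hi, by omega⟩
  have hy' : 1 ≤ i + 1 ∧ i + 1 ≤ n := ⟨by omega, by omega⟩
  rw [ss_eq_mkAlgHom ⟨hi, hin⟩, ee_eq_mkAlgHom ⟨hi, hin⟩, yy_eq_mkAlgHom hy, yy_eq_mkAlgHom hy',
    ← map_mul, ← map_mul, ← map_sub,
    RingQuot.mkAlgHom_rel ℂ (Rel.ys_rel i ⟨hi, hin⟩ hy hy'), map_sub, map_one]

theorem ee_mul_yy_sub_yy (hi : 1 ≤ i) (hin : i ≤ n - 1) :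
    ee n i * (yy n i - yy n (i + 1)) = -ee n i := by
  have hy : 1 ≤ i ∧ i ≤ n := ⟨hi, by omega⟩
  have hy' : 1 ≤ i + 1 ∧ i + 1 ≤ n := ⟨by omega, by omega⟩
  rw [ee_eq_mkAlgHom ⟨hi, hin⟩, yy_eq_mkAlgHom hy, yy_eq_mkAlgHom hy', ← map_sub, ← map_mul,
    RingQuot.mkAlgHom_rel ℂ (Rel.e_ydiff i ⟨hi, hin⟩ hy hy'), map_neg]

theorem yy_sub_yy_mul_ee (hi : 1 ≤ i) (hin : i ≤ n - 1) :
    (yy n i - yy n (i + 1)) * ee n i = ee n i := by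
  have hy : 1 ≤ i ∧ i ≤ n := ⟨hi, by omega⟩
  have hy' : 1 ≤ i + 1 ∧ i + 1 ≤ n := ⟨by omega, by omega⟩
  rw [ee_eq_mkAlgHom ⟨hi, hin⟩, yy_eq_mkAlgHom hy, yy_eq_mkAlgHom hy', ← map_sub, ← map_mul,
    RingQuot.mkAlgHom_rel ℂ (Rel.ydiff_e i ⟨hi, hin⟩ hy hy')]

end GeneratorRelations

theorem diag_ss_eq_one_or_neg_one_and_diag_yy_succ {n d i : ℕ}
    {ρ : sVV n →ₐ[ℂ] Matrix (Fin d) (Fin d) ℂ} (hcal : IsCalibrated ρ) (hi : 1 ≤ i)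
    (hin : i ≤ n - 1)
    (hes : ∀ ℓ m : Fin d, ℓ ≠ m → (ρ (ee n i) ℓ m ≠ 0 ↔ ρ (ss n i) ℓ m ≠ 0)) (m : Fin d) :
    (ρ (ss n i) m m = 1 ∨ ρ (ss n i) m m = -1) ∧
      ρ (yy n (i + 1)) m m = ρ (yy n i) m m + ρ (ss n i) m m := by
  refine diag_eq_one_or_neg_one_and_diag_add (hcal i hi (by omega)) (hcal (i + 1) (by omega)
    (by omega)) ?_ ?_ ?_ ?_ ?_ hes m
  · simpa using congrArg ρ (ss_mul_self hi hin)
  · simpa using congrArg ρ (ss_mul_yy_sub_yy_mul_ss hi hin)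
  · simpa using congrArg ρ (yy_mul_ss_sub_ss_mul_yy hi hin)
  · simpa using congrArg ρ (ee_mul_yy_sub_yy hi hin)
  · simpa using congrArg ρ (yy_sub_yy_mul_ee hi hin)

theorem eigenvalue_closed_formula_general (n d : ℕ)
    (ρ : sVV n →ₐ[ℂ] Matrix (Fin d) (Fin d) ℂ) (hcal : IsCalibrated ρ)
    (h1 : ρ (yy n 1) = 0)
    (hes : ∀ i : ℕ, 1 ≤ i → i ≤ n - 1 → ∀ ℓ m : Fin d, ℓ ≠ m →
      (ρ (ee n i) ℓ m ≠ 0 ↔ ρ (ss n i) ℓ m ≠ 0)) :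
    (∀ i : ℕ, 1 ≤ i → i ≤ n - 1 → ∀ ℓ : Fin d,
      ρ (ss n i) ℓ ℓ = 1 ∨ ρ (ss n i) ℓ ℓ = -1) ∧
    (∀ j : ℕ, 1 ≤ j → j ≤ n - 1 → ∀ m : Fin d,
      ρ (yy n (j+1)) m m = ρ (yy n j) m m + ρ (ss n j) m m) ∧
    (∀ j : ℕ, 1 ≤ j → j ≤ n - 1 → ∀ m : Fin d,
      ρ (yy n (j+1)) m m = ∑ a ∈ Finset.Icc 1 j, ρ (ss n a) m m) := by
  have step (i : ℕ) (hi : 1 ≤ i) (hin : i ≤ n - 1) (m : Fin d) :=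
    diag_ss_eq_one_or_neg_one_and_diag_yy_succ hcal hi hin (hes i hi hin) m
  refine ⟨fun i hi hin m => (step i hi hin m).1, fun j hj hjn m => (step j hj hjn m).2, ?_⟩
  intro j hj
  induction j, hj using Nat.le_induction with
  | base =>
    intro h1n m
    simp [(step 1 le_rfl h1n m).2, h1]
  | succ k hk ih =>
    intro hkn m
    rw [(step (k + 1) (by omega) hkn m).2, ih (by omega) m,
      Finset.sum_Icc_succ_top (by omega : 1 ≤ k + 1)]

/-- Let `ρ` be a calibrated representation of `sVV n` with `ρ(y_1) = 0`,
such that for every `i` and all `ℓ ≠ m` the off-diagonal entry `(ρ(e_i))_{ℓm}` is nonzero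
iff `(ρ(s_i))_{ℓm}` is nonzero.  Then every diagonal entry of every `ρ(s_i)` is `±1`,
`(ρ(y_{j+1}))_{mm} = (ρ(y_j))_{mm} + (ρ(s_j))_{mm}`, and consequently
`(ρ(y_{j+1}))_{mm} = Σ_{a=1}^{j} (ρ(s_a))_{mm}`, a sum of `j` terms each equal to `±1`. -/
theorem eigenvalue_closed_formula (n d : ℕ) (hn : 2 ≤ n) (hd : 1 ≤ d)
    (ρ : sVV n →ₐ[ℂ] Matrix (Fin d) (Fin d) ℂ) (hcal : IsCalibrated ρ)
    (h1 : ρ (yy n 1) = 0)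
    (hes : ∀ i : ℕ, 1 ≤ i → i ≤ n - 1 → ∀ ℓ m : Fin d, ℓ ≠ m →
      (ρ (ee n i) ℓ m ≠ 0 ↔ ρ (ss n i) ℓ m ≠ 0)) :
    (∀ i : ℕ, 1 ≤ i → i ≤ n - 1 → ∀ ℓ : Fin d,
      ρ (ss n i) ℓ ℓ = 1 ∨ ρ (ss n i) ℓ ℓ = -1) ∧
    (∀ j : ℕ, 1 ≤ j → j ≤ n - 1 → ∀ m : Fin d,
      ρ (yy n (j+1)) m m = ρ (yy n j) m m + ρ (ss n j) m m) ∧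
    (∀ j : ℕ, 1 ≤ j → j ≤ n - 1 → ∀ m : Fin d,
      ρ (yy n (j+1)) m m = ∑ a ∈ Finset.Icc 1 j, ρ (ss n a) m m) :=
  eigenvalue_closed_formula_general n d ρ hcal h1 hes

end Periplectic
end
end

section
/- Let n ≥ 3 and 1 ≤ k ≤ n−2, let d = binom(n−1,k), and consider the matrices S_i, E_i ∈ Mat_d(ℂ) of the context (α = 0). Then: (a) every matrix X ∈ Mat_d(ℂ) commuting with S_i and E_i for all 1 ≤ i ≤ n−2 is a scalar multiple of the identity, so the restriction of the representation to the subalgebra generated by s_1,…,s_{n−2}, e_1,…,e_{n−2} (a copy of the periplectic Brauer algebra A_{n−1}) is indecomposable; (b) the subspace W spanned by the basis vectors indexed by the k-element subsets of {1,…,n−2} is invariant under S_i and E_i for all 1 ≤ i ≤ n−2, has dimension binom(n−2,k), and both W and the quotient ℂ^d / W (of dimension binom(n−2,k−1)) have no nonzero proper subspaces invariant under all these operators; (c) W has no invariant complement in ℂ^d, i.e. the resulting short exact sequence of A_{n−1}-representations is non-split. -/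
noncomputable section

namespace Periplectic

/-- The index set for the `k`-th exterior power: `k`-element subsets of `{1, …, n-1}`
(a value `v : Fin (n-1)` carries the label `v+1`). -/
abbrev Idx (n k : ℕ) : Type := {A : Finset (Fin (n-1)) // A.card = k}

/-- The label `i` belongs to the subset `A` (labels are values plus one). -/
def memI (n : ℕ) (i : ℕ) (A : Finset (Fin (n-1))) : Prop :=
  ∃ v ∈ A, (v : ℕ) + 1 = i

/-- `B` is obtained from `A` by replacing the label `i ∈ A` by `i+1 ∉ A` (with `i+1 ≤ n-1`). -/
def moveUp (n i : ℕ) (A B : Finset (Fin (n-1))) : Prop :=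
  ∃ v ∈ A, ∃ w : Fin (n-1), (v : ℕ) + 1 = i ∧ (w : ℕ) + 1 = i + 1 ∧ w ∉ A ∧
    B = insert w (A.erase v)

/-- `B` is obtained from `A` by replacing the label `i ∈ A` by `i-1 ∉ A` (with `i-1 ≥ 1`). -/
def moveDown (n i : ℕ) (A B : Finset (Fin (n-1))) : Prop :=
  ∃ v ∈ A, ∃ w : Fin (n-1), (v : ℕ) + 1 = i ∧ (w : ℕ) + 2 = i ∧ w ∉ A ∧
    B = insert w (A.erase v)

attribute [local instance] Classical.propDecidable

/-- The matrix `S_i` acting on the `k`-th exterior power of the standard representation: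
diagonal entry `-1` at `A` if `i ∈ A` and `+1` otherwise; off-diagonal entry `-1` at `(A,B)`
whenever `B = (A∖{i}) ∪ {i±1}` as in the context; all other entries `0`. -/
def SM (n k i : ℕ) : Matrix (Idx n k) (Idx n k) ℂ :=
  Matrix.of fun A B =>
    if A = B then (if memI n i A.1 then -1 else 1)
    else if moveUp n i A.1 B.1 ∨ moveDown n i A.1 B.1 then -1 else 0

/-- The matrix `E_i` acting on the `k`-th exterior power: entry `+1` at `(A, (A∖{i})∪{i+1})`,
entry `-1` at `(A, (A∖{i})∪{i-1})`, all other entries `0`. -/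
def EM (n k i : ℕ) : Matrix (Idx n k) (Idx n k) ℂ :=
  Matrix.of fun A B =>
    if moveUp n i A.1 B.1 then 1
    else if moveDown n i A.1 B.1 then -1 else 0

/-- The diagonal matrices `Y_j`: `Y_1 = α·Id` and `Y_{j+1} = Y_j + diag(S_j)`. -/
def YM (n k : ℕ) (α : ℂ) : ℕ → Matrix (Idx n k) (Idx n k) ℂ
  | 0 => 0
  | 1 => α • (1 : Matrix (Idx n k) (Idx n k) ℂ)
  | (j+2) => YM n k α (j+1) +
      Matrix.of (fun A B : Idx n k => if A = B then SM n k (j+1) A B else 0)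

/-- A subspace of `ℂ^{binom(n-1,k)}` is invariant for the restriction of the representation
`C₀(Λᵏ V_n)` to the subalgebra `A_{n-1}` generated by `s_1, …, s_{n-2}, e_1, …, e_{n-2}`. -/
def RestrInvariant (n k : ℕ) (U : Submodule ℂ (Idx n k → ℂ)) : Prop :=
  ∀ i : ℕ, 1 ≤ i → i ≤ n - 2 → ∀ x ∈ U,
    (SM n k i).mulVec x ∈ U ∧ (EM n k i).mulVec x ∈ U

/-- The subspace `W` spanned by the basis vectors indexed by the `k`-element subsets of
`{1, …, n-2}`, i.e. those coordinates vanish which are indexed by subsets containing `n-1`. -/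
def Wsub (n k : ℕ) : Submodule ℂ (Idx n k → ℂ) where
  carrier := {x | ∀ A : Idx n k, memI n (n-1) A.1 → x A = 0}
  add_mem' := by
    intro x y hx hy A hA
    simp [hx A hA, hy A hA]
  zero_mem' := by
    intro A hA
    rfl
  smul_mem' := by
    intro c x hx A hA
    simp [hx A hA]


section Aux

variable {n k : ℕ}

lemma memI_iff {i : ℕ} {A : Finset (Fin (n-1))} (v : Fin (n-1)) (hv : (v:ℕ) + 1 = i) :
    memI n i A ↔ v ∈ A := by
  constructor
  · rintro ⟨u, hu, h⟩
    have huv : u = v := Fin.ext (by omega)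
    exact huv ▸ hu
  · intro h; exact ⟨v, h, hv⟩

lemma moveUp_iff {i : ℕ} {A B : Finset (Fin (n-1))} (a b : Fin (n-1))
    (ha : (a:ℕ) + 1 = i) (hb : (b:ℕ) = i) :
    moveUp n i A B ↔ a ∈ A ∧ b ∉ A ∧ B = insert b (A.erase a) := by
  constructor
  · rintro ⟨v, hv, w, hvi, hwi, hw, hB⟩
    have hva : v = a := Fin.ext (by omega)
    have hwb : w = b := Fin.ext (by omega)
    subst hva; subst hwb
    exact ⟨hv, hw, hB⟩
  · rintro ⟨h1, h2, h3⟩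
    exact ⟨a, h1, b, ha, by omega, h2, h3⟩

lemma moveDown_iff {i : ℕ} {A B : Finset (Fin (n-1))} (a c : Fin (n-1))
    (ha : (a:ℕ) + 1 = i) (hc : (c:ℕ) + 2 = i) :
    moveDown n i A B ↔ a ∈ A ∧ c ∉ A ∧ B = insert c (A.erase a) := by
  constructor
  · rintro ⟨v, hv, w, hvi, hwi, hw, hB⟩
    have hva : v = a := Fin.ext (by omega)
    have hwc : w = c := Fin.ext (by omega)
    subst hva; subst hwc
    exact ⟨hv, hw, hB⟩
  · rintro ⟨h1, h2, h3⟩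
    exact ⟨a, h1, c, ha, by omega, h2, h3⟩

lemma moveUp_elim {i : ℕ} {A B : Finset (Fin (n-1))} (h : moveUp n i A B) :
    ∃ a b : Fin (n-1), (a:ℕ) + 1 = i ∧ (b:ℕ) = i ∧ a ∈ A ∧ b ∉ A ∧
      B = insert b (A.erase a) := by
  obtain ⟨v, hv, w, hvi, hwi, hw, hB⟩ := h
  exact ⟨v, w, hvi, by omega, hv, hw, hB⟩

lemma moveDown_elim {i : ℕ} {A B : Finset (Fin (n-1))} (h : moveDown n i A B) :
    ∃ a c : Fin (n-1), (a:ℕ) + 1 = i ∧ (c:ℕ) + 2 = i ∧ a ∈ A ∧ c ∉ A ∧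
      B = insert c (A.erase a) := by
  obtain ⟨v, hv, w, hvi, hwi, hw, hB⟩ := h
  exact ⟨v, w, hvi, hwi, hv, hw, hB⟩

lemma moveUp_ne {i : ℕ} {A B : Finset (Fin (n-1))} (h : moveUp n i A B) : A ≠ B := by
  obtain ⟨a, b, ha, hb, haA, hbA, hB⟩ := moveUp_elim h
  intro hAB
  exact hbA (hAB ▸ (hB ▸ Finset.mem_insert_self b _))

lemma moveDown_ne {i : ℕ} {A B : Finset (Fin (n-1))} (h : moveDown n i A B) : A ≠ B := by
  obtain ⟨a, c, ha, hc, haA, hcA, hB⟩ := moveDown_elim h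
  intro hAB
  exact hcA (hAB ▸ (hB ▸ Finset.mem_insert_self c _))

lemma not_moveUp_moveDown {i : ℕ} {A B : Finset (Fin (n-1))}
    (h1 : moveUp n i A B) (h2 : moveDown n i A B) : False := by
  obtain ⟨a, b, ha, hb, haA, hbA, hB⟩ := moveUp_elim h1
  obtain ⟨a', c, ha', hc, haA', hcA, hB'⟩ := moveDown_elim h2
  have hbB : b ∈ B := hB ▸ Finset.mem_insert_self b _
  rw [hB'] at hbB
  rcases Finset.mem_insert.mp hbB with h | h
  · omega
  · exact hbA (Finset.mem_of_mem_erase h)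

lemma moveUp_card {i : ℕ} {A B : Finset (Fin (n-1))} (h : moveUp n i A B) :
    B.card = A.card := by
  obtain ⟨a, b, ha, hb, haA, hbA, hB⟩ := moveUp_elim h
  have hbe : b ∉ A.erase a := fun hx => hbA (Finset.mem_of_mem_erase hx)
  have h1 : 1 ≤ A.card := Finset.card_pos.mpr ⟨a, haA⟩
  rw [hB, Finset.card_insert_of_notMem hbe, Finset.card_erase_of_mem haA]
  omega

lemma moveDown_card {i : ℕ} {A B : Finset (Fin (n-1))} (h : moveDown n i A B) :
    B.card = A.card := by
  obtain ⟨a, c, ha, hc, haA, hcA, hB⟩ := moveDown_elim h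
  have hce : c ∉ A.erase a := fun hx => hcA (Finset.mem_of_mem_erase hx)
  have h1 : 1 ≤ A.card := Finset.card_pos.mpr ⟨a, haA⟩
  rw [hB, Finset.card_insert_of_notMem hce, Finset.card_erase_of_mem haA]
  omega

lemma moveUp_inv {i : ℕ} {A B : Finset (Fin (n-1))} (h : moveUp n i A B) :
    moveDown n (i+1) B A := by
  obtain ⟨a, b, ha, hb, haA, hbA, hB⟩ := moveUp_elim h
  have hab : a ≠ b := fun hx => by rw [hx] at ha; omega
  rw [moveDown_iff b a (by omega) (by omega)]
  have hbe : b ∉ A.erase a := fun hx => hbA (Finset.mem_of_mem_erase hx)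
  refine ⟨hB ▸ Finset.mem_insert_self b _, ?_, ?_⟩
  · rw [hB]
    intro hx
    rcases Finset.mem_insert.mp hx with h' | h'
    · exact hab h'
    · exact (Finset.notMem_erase a A) h'
  · rw [hB, Finset.erase_insert hbe, Finset.insert_erase haA]

lemma moveDown_inv {i : ℕ} {A B : Finset (Fin (n-1))} (h : moveDown n i A B) :
    moveUp n (i-1) B A := by
  obtain ⟨a, c, ha, hc, haA, hcA, hB⟩ := moveDown_elim h
  have hac : a ≠ c := fun hx => by rw [hx] at ha; omega
  rw [moveUp_iff c a (by omega) (by omega)]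
  have hce : c ∉ A.erase a := fun hx => hcA (Finset.mem_of_mem_erase hx)
  refine ⟨hB ▸ Finset.mem_insert_self c _, ?_, ?_⟩
  · rw [hB]
    intro hx
    rcases Finset.mem_insert.mp hx with h' | h'
    · exact hac h'
    · exact (Finset.notMem_erase a A) h'
  · rw [hB, Finset.erase_insert hce, Finset.insert_erase haA]

end Aux


section Mat

variable {n k : ℕ}

/-- Diagonal indicator matrix. -/
def Dg (n k : ℕ) (p : Finset (Fin (n-1)) → Prop) : Matrix (Idx n k) (Idx n k) ℂ :=
  Matrix.of fun A B => if A = B ∧ p A.1 then 1 else 0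

/-- The `moveUp` pattern matrix. -/
def UU (n k i : ℕ) : Matrix (Idx n k) (Idx n k) ℂ :=
  Matrix.of fun A B => if moveUp n i A.1 B.1 then 1 else 0

/-- The `moveDown` pattern matrix. -/
def VV (n k i : ℕ) : Matrix (Idx n k) (Idx n k) ℂ :=
  Matrix.of fun A B => if moveDown n i A.1 B.1 then 1 else 0

lemma SM_eq (i : ℕ) :
    SM n k i = 1 - (2:ℂ) • Dg n k (memI n i) - UU n k i - VV n k i := by
  ext A B
  simp only [SM, Dg, UU, VV, Matrix.sub_apply, Matrix.smul_apply, Matrix.one_apply,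
    Matrix.of_apply, smul_eq_mul]
  by_cases hAB : A = B
  · subst hAB
    have hu : ¬ moveUp n i A.1 A.1 := fun h => moveUp_ne h rfl
    have hd : ¬ moveDown n i A.1 A.1 := fun h => moveDown_ne h rfl
    by_cases hm : memI n i A.1 <;> simp [hu, hd, hm] <;> ring
  · have h1 : ¬(A = B ∧ memI n i A.1) := fun h => hAB h.1
    by_cases hu : moveUp n i A.1 B.1
    · have hd : ¬ moveDown n i A.1 B.1 := fun h => not_moveUp_moveDown hu h
      simp [hAB, h1, hu, hd]
    · by_cases hd : moveDown n i A.1 B.1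
      · simp [hAB, h1, hu, hd]
      · simp [hAB, h1, hu, hd]

lemma EM_eq (i : ℕ) : EM n k i = UU n k i - VV n k i := by
  ext A B
  simp only [EM, UU, VV, Matrix.sub_apply, Matrix.of_apply]
  by_cases hu : moveUp n i A.1 B.1
  · have hd : ¬ moveDown n i A.1 B.1 := fun h => not_moveUp_moveDown hu h
    simp [hu, hd]
  · by_cases hd : moveDown n i A.1 B.1 <;> simp [hu, hd]

lemma Dg_mul (p : Finset (Fin (n-1)) → Prop) (M : Matrix (Idx n k) (Idx n k) ℂ) :
    Dg n k p * M = Matrix.of fun A C => if p A.1 then M A C else 0 := by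
  ext A C
  rw [Matrix.mul_apply]
  have h : ∀ B : Idx n k, (if A = B ∧ p A.1 then (1:ℂ) else 0) * M B C
      = if A = B then (if p A.1 then M A C else 0) else 0 := by
    intro B
    by_cases h1 : A = B
    · subst h1; by_cases h2 : p A.1 <;> simp [h2]
    · simp [h1]
  rw [show (∑ B, Dg n k p A B * M B C) = ∑ B, (if A = B ∧ p A.1 then (1:ℂ) else 0) * M B C
      from rfl]
  rw [Finset.sum_congr rfl (fun B _ => h B), Finset.sum_ite_eq]
  simp

lemma mul_Dg (M : Matrix (Idx n k) (Idx n k) ℂ) (p : Finset (Fin (n-1)) → Prop) :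
    M * Dg n k p = Matrix.of fun A C => if p C.1 then M A C else 0 := by
  ext A C
  rw [Matrix.mul_apply]
  have h : ∀ B : Idx n k, M A B * (if B = C ∧ p B.1 then (1:ℂ) else 0)
      = if B = C then (if p C.1 then M A C else 0) else 0 := by
    intro B
    by_cases h1 : B = C
    · subst h1; by_cases h2 : p B.1 <;> simp [h2]
    · simp [h1]
  rw [show (∑ B, M A B * Dg n k p B C) = ∑ B, M A B * (if B = C ∧ p B.1 then (1:ℂ) else 0)
      from rfl]
  rw [Finset.sum_congr rfl (fun B _ => h B), Finset.sum_ite_eq']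
  simp

lemma Dg_mul_Dg (p q : Finset (Fin (n-1)) → Prop) :
    Dg n k p * Dg n k q = Dg n k (fun X => p X ∧ q X) := by
  rw [Dg_mul]
  ext A C
  simp only [Matrix.of_apply, Dg]
  by_cases h2 : A = C
  · subst h2; by_cases h1 : p A.1 <;> by_cases h3 : q A.1 <;> simp [h1, h3]
  · simp [h2]

lemma one_sub_Dg (p : Finset (Fin (n-1)) → Prop) :
    (1 : Matrix (Idx n k) (Idx n k) ℂ) - Dg n k p = Dg n k (fun X => ¬ p X) := by
  ext A C
  simp only [Matrix.sub_apply, Matrix.one_apply, Dg, Matrix.of_apply]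
  by_cases h1 : A = C
  · subst h1; by_cases h2 : p A.1 <;> simp [h2]
  · simp [h1]

lemma Dg_congr {p q : Finset (Fin (n-1)) → Prop}
    (h : ∀ X : Idx n k, p X.1 ↔ q X.1) : Dg n k p = Dg n k q := by
  ext A C
  simp only [Dg, Matrix.of_apply]
  by_cases h1 : A = C
  · subst h1
    by_cases h2 : p A.1
    · simp [h2, (h A).mp h2]
    · have h3 : ¬ q A.1 := fun hq => h2 ((h A).mpr hq)
      simp [h2, h3]
  · simp [h1]

lemma Dg_true : Dg n k (fun _ => True) = 1 := by
  ext A C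
  simp [Dg, Matrix.one_apply]

lemma sum_eq_single_idx {f : Idx n k → ℂ} (B0 : Idx n k) (h : ∀ B, f B ≠ 0 → B = B0) :
    ∑ B, f B = f B0 :=
  Finset.sum_eq_single_of_mem B0 (Finset.mem_univ _)
    (fun B _ hne => by_contra fun h0 => hne (h B h0))

lemma VV_one : VV n k 1 = (0 : Matrix (Idx n k) (Idx n k) ℂ) := by
  ext A B
  simp only [VV, Matrix.of_apply, Matrix.zero_apply]
  have : ¬ moveDown n 1 A.1 B.1 := by
    intro h
    obtain ⟨a, c, ha, hc, _⟩ := moveDown_elim h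
    omega
  simp [this]

lemma Dg_succ_mul_UU (i : ℕ) :
    Dg n k (memI n (i+1)) * UU n k i = 0 := by
  rw [Dg_mul]
  ext A C
  simp only [Matrix.of_apply, Matrix.zero_apply]
  by_cases hm : memI n (i+1) A.1
  · have : ¬ moveUp n i A.1 C.1 := by
      intro h
      obtain ⟨a, b, ha, hb, haA, hbA, hB⟩ := moveUp_elim h
      obtain ⟨v, hv, hvi⟩ := hm
      have : v = b := Fin.ext (by omega)
      exact hbA (this ▸ hv)
    simp [hm, UU, this]
  · simp [hm]

lemma UU_mul_Dg_succ (i : ℕ) :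
    UU n k i * Dg n k (memI n (i+1)) = UU n k i := by
  rw [mul_Dg]
  ext A C
  simp only [Matrix.of_apply]
  by_cases hm : memI n (i+1) C.1
  · simp [hm]
  · have : ¬ moveUp n i A.1 C.1 := by
      intro h
      obtain ⟨a, b, ha, hb, haA, hbA, hB⟩ := moveUp_elim h
      exact hm ⟨b, hB ▸ Finset.mem_insert_self b _, by omega⟩
    simp [hm, UU, this]

end Mat


section Prod

variable {n k : ℕ}

lemma VV_succ_mul_UU {i : ℕ} (hi1 : 1 ≤ i) (hi2 : i < n-1) :
    VV n k (i+1) * UU n k i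
      = Dg n k (fun X => memI n (i+1) X ∧ ¬ memI n i X) := by
  have hlt : i - 1 < n - 1 := by omega
  set a : Fin (n-1) := ⟨i-1, hlt⟩ with ha_def
  set b : Fin (n-1) := ⟨i, hi2⟩ with hb_def
  have ha : (a:ℕ) + 1 = i := by rw [ha_def]; simp; omega
  have hb : (b:ℕ) = i := by rw [hb_def]
  have hmemb : ∀ X : Finset (Fin (n-1)), memI n (i+1) X ↔ b ∈ X :=
    fun X => memI_iff b (by omega)
  have hmema : ∀ X : Finset (Fin (n-1)), memI n i X ↔ a ∈ X :=
    fun X => memI_iff a ha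
  have hab : a ≠ b := by
    intro hx
    have : (a:ℕ) = (b:ℕ) := by rw [hx]
    omega
  ext A C
  rw [Matrix.mul_apply]
  by_cases h : b ∈ A.1 ∧ a ∉ A.1
  · have hnae : a ∉ A.1.erase b := fun hx => h.2 (Finset.mem_of_mem_erase hx)
    have hcard : (insert a (A.1.erase b)).card = k := by
      rw [Finset.card_insert_of_notMem hnae, Finset.card_erase_of_mem h.1]
      have h1 : 1 ≤ A.1.card := Finset.card_pos.mpr ⟨b, h.1⟩
      have h2 := A.2
      omega
    set B0 : Idx n k := ⟨insert a (A.1.erase b), hcard⟩ with hB0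
    have hmd : moveDown n (i+1) A.1 B0.1 :=
      (moveDown_iff b a (by omega) (by omega)).mpr ⟨h.1, h.2, rfl⟩
    have huniq : ∀ B : Idx n k, VV n k (i+1) A B * UU n k i B C ≠ 0 → B = B0 := by
      intro B hne
      have hv : moveDown n (i+1) A.1 B.1 := by
        by_contra hc
        simp [VV, hc] at hne
      rw [moveDown_iff b a (by omega) (by omega)] at hv
      exact Subtype.ext hv.2.2
    rw [sum_eq_single_idx B0 huniq]
    have h1 : VV n k (i+1) A B0 = 1 := by simp [VV, hmd]
    rw [h1, one_mul]
    have hbe : b ∉ (B0.1).erase a → True := fun _ => trivial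
    have herase : (B0.1).erase a = A.1.erase b := Finset.erase_insert hnae
    have hup : moveUp n i B0.1 C.1 ↔ A = C := by
      constructor
      · intro hu
        rw [moveUp_iff a b ha hb] at hu
        have hC : C.1 = A.1 := by
          rw [hu.2.2, herase, Finset.insert_erase h.1]
        exact (Subtype.ext hC).symm
      · rintro rfl
        rw [moveUp_iff a b ha hb]
        refine ⟨Finset.mem_insert_self a _, ?_, ?_⟩
        · intro hx
          rcases Finset.mem_insert.mp hx with h' | h'
          · exact hab h'.symm
          · exact (Finset.notMem_erase b A.1) h'
        · rw [herase, Finset.insert_erase h.1]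
    have hcond : (A = C ∧ (memI n (i+1) A.1 ∧ ¬ memI n i A.1)) ↔ A = C := by
      constructor
      · exact And.left
      · intro hAC
        exact ⟨hAC, (hmemb _).mpr h.1, fun hm => h.2 ((hmema _).mp hm)⟩
    simp only [UU, Dg, Matrix.of_apply]
    rw [if_congr hup rfl rfl]; simp only [hcond]
  · have hz : ∀ B : Idx n k, VV n k (i+1) A B * UU n k i B C = 0 := by
      intro B
      have hv : ¬ moveDown n (i+1) A.1 B.1 := by
        intro hm
        rw [moveDown_iff b a (by omega) (by omega)] at hm
        exact h ⟨hm.1, hm.2.1⟩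
      simp [VV, hv]
    rw [Finset.sum_eq_zero (fun B _ => hz B)]
    have hng : ¬(A = C ∧ (memI n (i+1) A.1 ∧ ¬ memI n i A.1)) := by
      rintro ⟨_, hm1, hm2⟩
      exact h ⟨(hmemb _).mp hm1, fun hx => hm2 ((hmema _).mpr hx)⟩
    simp [Dg, hng]

lemma UU_mul_VV_succ {i : ℕ} (hi1 : 1 ≤ i) (hi2 : i < n-1) :
    UU n k i * VV n k (i+1)
      = Dg n k (fun X => memI n i X ∧ ¬ memI n (i+1) X) := by
  have hlt : i - 1 < n - 1 := by omega
  set a : Fin (n-1) := ⟨i-1, hlt⟩ with ha_def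
  set b : Fin (n-1) := ⟨i, hi2⟩ with hb_def
  have ha : (a:ℕ) + 1 = i := by rw [ha_def]; simp; omega
  have hb : (b:ℕ) = i := by rw [hb_def]
  have hmemb : ∀ X : Finset (Fin (n-1)), memI n (i+1) X ↔ b ∈ X :=
    fun X => memI_iff b (by omega)
  have hmema : ∀ X : Finset (Fin (n-1)), memI n i X ↔ a ∈ X :=
    fun X => memI_iff a ha
  have hab : a ≠ b := by
    intro hx
    have : (a:ℕ) = (b:ℕ) := by rw [hx]
    omega
  ext A C
  rw [Matrix.mul_apply]
  by_cases h : a ∈ A.1 ∧ b ∉ A.1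
  · have hnbe : b ∉ A.1.erase a := fun hx => h.2 (Finset.mem_of_mem_erase hx)
    have hcard : (insert b (A.1.erase a)).card = k := by
      rw [Finset.card_insert_of_notMem hnbe, Finset.card_erase_of_mem h.1]
      have h1 : 1 ≤ A.1.card := Finset.card_pos.mpr ⟨a, h.1⟩
      have h2 := A.2
      omega
    set B0 : Idx n k := ⟨insert b (A.1.erase a), hcard⟩ with hB0
    have hmu : moveUp n i A.1 B0.1 :=
      (moveUp_iff a b ha hb).mpr ⟨h.1, h.2, rfl⟩
    have huniq : ∀ B : Idx n k, UU n k i A B * VV n k (i+1) B C ≠ 0 → B = B0 := by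
      intro B hne
      have hv : moveUp n i A.1 B.1 := by
        by_contra hc
        simp [UU, hc] at hne
      rw [moveUp_iff a b ha hb] at hv
      exact Subtype.ext hv.2.2
    rw [sum_eq_single_idx B0 huniq]
    have h1 : UU n k i A B0 = 1 := by simp [UU, hmu]
    rw [h1, one_mul]
    have herase : (B0.1).erase b = A.1.erase a := Finset.erase_insert hnbe
    have hdn : moveDown n (i+1) B0.1 C.1 ↔ A = C := by
      constructor
      · intro hu
        rw [moveDown_iff b a (by omega) (by omega)] at hu
        have hC : C.1 = A.1 := by
          rw [hu.2.2, herase, Finset.insert_erase h.1]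
        exact (Subtype.ext hC).symm
      · rintro rfl
        rw [moveDown_iff b a (by omega) (by omega)]
        refine ⟨Finset.mem_insert_self b _, ?_, ?_⟩
        · intro hx
          rcases Finset.mem_insert.mp hx with h' | h'
          · exact hab h'
          · exact (Finset.notMem_erase a A.1) h'
        · rw [herase, Finset.insert_erase h.1]
    have hcond : (A = C ∧ (memI n i A.1 ∧ ¬ memI n (i+1) A.1)) ↔ A = C := by
      constructor
      · exact And.left
      · intro hAC
        exact ⟨hAC, (hmema _).mpr h.1, fun hm => h.2 ((hmemb _).mp hm)⟩
    simp only [VV, Dg, Matrix.of_apply]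
    rw [if_congr hdn rfl rfl]; simp only [hcond]
  · have hz : ∀ B : Idx n k, UU n k i A B * VV n k (i+1) B C = 0 := by
      intro B
      have hv : ¬ moveUp n i A.1 B.1 := by
        intro hm
        rw [moveUp_iff a b ha hb] at hm
        exact h ⟨hm.1, hm.2.1⟩
      simp [UU, hv]
    rw [Finset.sum_eq_zero (fun B _ => hz B)]
    have hng : ¬(A = C ∧ (memI n i A.1 ∧ ¬ memI n (i+1) A.1)) := by
      rintro ⟨_, hm1, hm2⟩
      exact h ⟨(hmema _).mp hm1, fun hx => hm2 ((hmemb _).mpr hx)⟩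
    simp [Dg, hng]

end Prod


section AlgSec

variable (n k : ℕ)

/-- The subalgebra generated by the matrices `S_i, E_i`, `1 ≤ i ≤ n-2`. -/
def Alg : Subalgebra ℂ (Matrix (Idx n k) (Idx n k) ℂ) :=
  Algebra.adjoin ℂ {M | ∃ i, 1 ≤ i ∧ i ≤ n-2 ∧ (M = SM n k i ∨ M = EM n k i)}

variable {n k}

lemma SM_mem {i : ℕ} (h1 : 1 ≤ i) (h2 : i ≤ n-2) : SM n k i ∈ Alg n k :=
  Algebra.subset_adjoin ⟨i, h1, h2, Or.inl rfl⟩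

lemma EM_mem {i : ℕ} (h1 : 1 ≤ i) (h2 : i ≤ n-2) : EM n k i ∈ Alg n k :=
  Algebra.subset_adjoin ⟨i, h1, h2, Or.inr rfl⟩

lemma DUV_mem (hn : 3 ≤ n) : ∀ i, 1 ≤ i → i ≤ n-2 →
    Dg n k (memI n i) ∈ Alg n k ∧ UU n k i ∈ Alg n k ∧ VV n k i ∈ Alg n k := by
  intro i
  induction i with
  | zero => intro h1 h2; exact absurd h1 (by omega)
  | succ j ih =>
    intro h1 h2
    have hCmem : (2:ℂ)⁻¹ • (1 - SM n k (j+1) - EM n k (j+1)) ∈ Alg n k := by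
      apply Subalgebra.smul_mem
      exact Subalgebra.sub_mem _ (Subalgebra.sub_mem _ (Subalgebra.one_mem _)
        (SM_mem (by omega) h2)) (EM_mem (by omega) h2)
    have hCeq : (2:ℂ)⁻¹ • (1 - SM n k (j+1) - EM n k (j+1))
        = Dg n k (memI n (j+1)) + VV n k (j+1) := by
      rw [SM_eq, EM_eq]
      module
    by_cases hj : j = 0
    · subst hj
      have hV : VV n k 1 = (0 : Matrix (Idx n k) (Idx n k) ℂ) := VV_one
      have hD : Dg n k (memI n 1) ∈ Alg n k := by
        have : Dg n k (memI n 1) = (2:ℂ)⁻¹ • (1 - SM n k 1 - EM n k 1) := by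
          rw [hCeq, hV, add_zero]
        rw [this]; exact hCmem
      refine ⟨hD, ?_, hV ▸ Subalgebra.zero_mem _⟩
      have : UU n k 1 = EM n k 1 + VV n k 1 := by rw [EM_eq]; abel
      rw [this, hV, add_zero]; exact EM_mem (by omega) h2
    · obtain ⟨hDj, hUj, hVj⟩ := ih (by omega) (by omega)
      have hkey : Dg n k (memI n (j+1)) =
          (Dg n k (memI n (j+1)) + VV n k (j+1)) * UU n k j
          - UU n k j * (Dg n k (memI n (j+1)) + VV n k (j+1))
          + UU n k j + Dg n k (memI n j) := by
        rw [add_mul, mul_add]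
        rw [Dg_succ_mul_UU j, VV_succ_mul_UU (i:=j) (by omega) (by omega),
            UU_mul_Dg_succ j, UU_mul_VV_succ (i:=j) (by omega) (by omega)]
        ext A B
        have hUdiag : ∀ X Y : Idx n k, X = Y → UU n k j X Y = 0 := by
          rintro X Y rfl
          have hnm : ¬ moveUp n j X.1 X.1 := fun h => moveUp_ne h rfl
          simp [UU, hnm]
        simp only [Dg, Matrix.add_apply, Matrix.sub_apply, Matrix.zero_apply,
          Matrix.of_apply]
        by_cases hAB : A = B
        · subst hAB
          rw [hUdiag A A rfl]
          by_cases hm1 : memI n (j+1) A.1 <;> by_cases hm2 : memI n j A.1 <;>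
            simp [hm1, hm2] <;> ring
        · simp only [hAB, false_and, if_false]
          ring
      have hDmem : Dg n k (memI n (j+1)) ∈ Alg n k := by
        rw [hkey]
        rw [← hCeq]
        exact Subalgebra.add_mem _ (Subalgebra.add_mem _ (Subalgebra.sub_mem _
          (Subalgebra.mul_mem _ hCmem hUj) (Subalgebra.mul_mem _ hUj hCmem)) hUj) hDj
      have hVmem : VV n k (j+1) ∈ Alg n k := by
        have : VV n k (j+1) = (2:ℂ)⁻¹ • (1 - SM n k (j+1) - EM n k (j+1))
            - Dg n k (memI n (j+1)) := by rw [hCeq]; abel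
        rw [this]
        exact Subalgebra.sub_mem _ hCmem hDmem
      have hUmem : UU n k (j+1) ∈ Alg n k := by
        have : UU n k (j+1) = EM n k (j+1) + VV n k (j+1) := by rw [EM_eq]; abel
        rw [this]
        exact Subalgebra.add_mem _ (EM_mem (by omega) h2) hVmem
      exact ⟨hDmem, hUmem, hVmem⟩

end AlgSec


section UnitsSec

variable {n k : ℕ}

lemma Dg_list_prod (l : List ℕ) (ps : ℕ → Finset (Fin (n-1)) → Prop) :
    (l.map (fun i => Dg n k (ps i))).prod = Dg n k (fun X => ∀ i ∈ l, ps i X) := by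
  induction l with
  | nil =>
    simp only [List.map_nil, List.prod_nil]
    rw [← Dg_true]
    apply Dg_congr
    intro X
    simp
  | cons a l ih =>
    simp only [List.map_cons, List.prod_cons, ih, Dg_mul_Dg]
    apply Dg_congr
    intro X
    simp [List.forall_mem_cons]

lemma mem_agree_eq (hn : 3 ≤ n) {A B : Finset (Fin (n-1))} (hA : A.card = k) (hB : B.card = k)
    (h : ∀ i, 1 ≤ i → i ≤ n-2 → (memI n i A ↔ memI n i B)) : A = B := by
  have htlt : n - 2 < n - 1 := by omega
  set t : Fin (n-1) := ⟨n-2, htlt⟩ with ht_def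
  have hagree : ∀ v : Fin (n-1), v ≠ t → (v ∈ A ↔ v ∈ B) := by
    intro v hv
    have hv2 : (v:ℕ) < n - 1 := v.2
    have hvne : (v:ℕ) ≠ n-2 := fun hx => hv (Fin.ext (by rw [hx, ht_def]))
    have := h ((v:ℕ)+1) (by omega) (by omega)
    rwa [memI_iff v rfl, memI_iff v rfl] at this
  have herase : A.erase t = B.erase t := by
    ext v
    by_cases hv : v = t
    · subst hv; simp
    · simp [Finset.mem_erase, hv, hagree v hv]
  by_cases htA : t ∈ A <;> by_cases htB : t ∈ B
  · rw [← Finset.insert_erase htA, ← Finset.insert_erase htB, herase]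
  · exfalso
    have h1 : (A.erase t).card = k - 1 := by rw [Finset.card_erase_of_mem htA, hA]
    have h3 : (A.erase t).card = k := by rw [herase, Finset.erase_eq_of_notMem htB, hB]
    have h4 : 1 ≤ k := hA ▸ Finset.card_pos.mpr ⟨t, htA⟩
    omega
  · exfalso
    have h1 : (B.erase t).card = k - 1 := by rw [Finset.card_erase_of_mem htB, hB]
    have h3 : (B.erase t).card = k := by rw [← herase, Finset.erase_eq_of_notMem htA, hA]
    have h4 : 1 ≤ k := hB ▸ Finset.card_pos.mpr ⟨t, htB⟩
    omega
  · rw [← Finset.erase_eq_of_notMem htA, ← Finset.erase_eq_of_notMem htB, herase]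

lemma diagUnit_mem (hn : 3 ≤ n) (A0 : Idx n k) :
    Dg n k (· = A0.1) ∈ Alg n k := by
  have h1 : Dg n k (· = A0.1)
      = ((List.range' 1 (n-2)).map
          (fun i => Dg n k (fun X => memI n i X ↔ memI n i A0.1))).prod := by
    rw [Dg_list_prod]
    apply Dg_congr
    intro X
    constructor
    · intro hx i _
      rw [hx]
    · intro hall
      refine mem_agree_eq hn X.2 A0.2 (fun i hi1 hi2 => hall i ?_)
      rw [List.mem_range'_1]
      omega
  rw [h1]
  apply list_prod_mem
  intro M hM
  obtain ⟨i, hi, rfl⟩ := List.mem_map.mp hM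
  have hi' : 1 ≤ i ∧ i ≤ n-2 := by
    have := List.mem_range'_1.mp hi
    omega
  by_cases hm : memI n i A0.1
  · have heq : Dg n k (fun X => memI n i X ↔ memI n i A0.1) = Dg n k (memI n i) :=
      Dg_congr (fun X => by simp [hm])
    rw [heq]
    exact (DUV_mem hn i hi'.1 hi'.2).1
  · have heq : Dg n k (fun X => memI n i X ↔ memI n i A0.1)
        = 1 - Dg n k (memI n i) := by
      rw [one_sub_Dg]
      exact Dg_congr (fun X => by simp [hm])
    rw [heq]
    exact Subalgebra.sub_mem _ (Subalgebra.one_mem _) (DUV_mem hn i hi'.1 hi'.2).1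

/-- The matrix unit `e_{A,B}`. -/
def MUnit (A B : Idx n k) : Matrix (Idx n k) (Idx n k) ℂ :=
  Matrix.of fun X Y => if X = A ∧ Y = B then 1 else 0

lemma sandwich (M : Matrix (Idx n k) (Idx n k) ℂ) (A B : Idx n k) :
    Dg n k (· = A.1) * M * Dg n k (· = B.1) = M A B • MUnit A B := by
  rw [Dg_mul, mul_Dg]
  ext X Y
  simp only [Matrix.of_apply, Matrix.smul_apply, MUnit, smul_eq_mul]
  by_cases hX : X = A
  · by_cases hY : Y = B
    · subst hX; subst hY
      simp [Subtype.ext_iff.symm]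
    · have hY' : ¬ (Y.1 = B.1) := fun h => hY (Subtype.ext h)
      simp [hY', hY]
  · have hX' : ¬ (X.1 = A.1) := fun h => hX (Subtype.ext h)
    by_cases hY : Y.1 = B.1 <;> simp [hX', hX, hY]

lemma MUnit_mul_MUnit (A B C : Idx n k) :
    MUnit A B * MUnit B C = MUnit (n:=n) (k:=k) A C := by
  ext X Y
  rw [Matrix.mul_apply]
  have huniq : ∀ Z : Idx n k, MUnit A B X Z * MUnit B C Z Y ≠ 0 → Z = B := by
    intro Z hz
    by_cases h : X = A ∧ Z = B
    · exact h.2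
    · simp [MUnit, h] at hz
  rw [sum_eq_single_idx B huniq]
  simp only [MUnit, Matrix.of_apply]
  by_cases hX : X = A <;> by_cases hY : Y = C <;> simp [hX, hY]

lemma MUnit_mem_of_entry (hn : 3 ≤ n) {M : Matrix (Idx n k) (Idx n k) ℂ}
    (hM : M ∈ Alg n k) {A B : Idx n k} (h : M A B ≠ 0) : MUnit A B ∈ Alg n k := by
  have h2 := sandwich M A B
  have h3 : MUnit A B = (M A B)⁻¹ • (Dg n k (· = A.1) * M * Dg n k (· = B.1)) := by
    rw [h2, smul_smul, inv_mul_cancel₀ h, one_smul]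
  rw [h3]
  exact Subalgebra.smul_mem _ (Subalgebra.mul_mem _
    (Subalgebra.mul_mem _ (diagUnit_mem hn A) hM) (diagUnit_mem hn B)) _

lemma MUnit_diag_mem (hn : 3 ≤ n) (A : Idx n k) : MUnit A A ∈ Alg n k := by
  have h : MUnit A A = Dg n k (· = A.1) := by
    ext X Y
    simp only [MUnit, Dg, Matrix.of_apply]
    have hiff : (X = A ∧ Y = A) ↔ (X = Y ∧ X.1 = A.1) := by
      constructor
      · rintro ⟨h1, h2⟩
        subst h1; subst h2
        exact ⟨rfl, rfl⟩
      · rintro ⟨h1, h2⟩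
        have hXA : X = A := Subtype.ext h2
        subst h1; subst hXA
        exact ⟨rfl, rfl⟩
    rw [if_congr hiff rfl rfl]
    congr
  rw [h]
  exact diagUnit_mem hn A

end UnitsSec


section ConnSec

variable {n k : ℕ}

/-- The element of `Fin (n-1)` with label `n-1`. -/
def tfin (n : ℕ) (hn : 3 ≤ n) : Fin (n-1) := ⟨n-2, by omega⟩

@[simp] lemma tfin_val (hn : 3 ≤ n) : ((tfin n hn : Fin (n-1)) : ℕ) = n - 2 := rfl

/-- Initial segment `{labels 1,…,c}` as a subset of `Fin (n-1)`. -/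
def iseg (n c : ℕ) : Finset (Fin (n-1)) := Finset.univ.filter (fun v => (v:ℕ) < c)

lemma mem_iseg {c : ℕ} {v : Fin (n-1)} : v ∈ iseg n c ↔ (v:ℕ) < c := by
  simp [iseg]

lemma iseg_card {c : ℕ} (hc : c ≤ n-1) : (iseg n c).card = c := by
  have h : iseg n c = (Finset.range c).attachFin
      (fun m hm => by rw [Finset.mem_range] at hm; omega) := by
    ext v
    simp [iseg, Finset.mem_attachFin, Finset.mem_range]
  rw [h, Finset.card_attachFin, Finset.card_range]

lemma MUnit_up_mem (hn : 3 ≤ n) {i : ℕ} (h1 : 1 ≤ i) (h2 : i ≤ n-2) {A B : Idx n k}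
    (h : moveUp n i A.1 B.1) : MUnit A B ∈ Alg n k := by
  apply MUnit_mem_of_entry hn (DUV_mem hn i h1 h2).2.1
  simp [UU, h]

lemma MUnit_down_mem (hn : 3 ≤ n) {i : ℕ} (h1 : 1 ≤ i) (h2 : i ≤ n-2) {A B : Idx n k}
    (h : moveDown n i A.1 B.1) : MUnit A B ∈ Alg n k := by
  apply MUnit_mem_of_entry hn (DUV_mem hn i h1 h2).2.2
  simp [VV, h]

lemma gap_exists (hn : 3 ≤ n) {A : Finset (Fin (n-1))}
    (hne : A.erase (tfin n hn) ≠ iseg n ((A.erase (tfin n hn)).card)) :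
    ∃ v w : Fin (n-1), v ∈ A ∧ w ∉ A ∧ (w:ℕ)+1 = (v:ℕ) ∧ (v:ℕ) < n-2 := by
  by_contra hcon
  set t := tfin n hn with ht_def
  set A' := A.erase t with hA'
  have hval : ∀ v ∈ A', (v:ℕ) < n-2 := by
    intro v hv
    have h1 := Finset.mem_erase.mp hv
    have hv2 := v.2
    have h3 : (v:ℕ) ≠ n-2 := fun hx => h1.1 (Fin.ext (by rw [hx]; simp [ht_def]))
    omega
  have hno : ∀ v ∈ A', 1 ≤ (v:ℕ) → ∀ (hw : (v:ℕ)-1 < n-1),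
      (⟨(v:ℕ)-1, hw⟩ : Fin (n-1)) ∈ A' := by
    intro v hv h1 hw
    by_contra hwmem
    apply hcon
    refine ⟨v, ⟨(v:ℕ)-1, hw⟩, Finset.mem_of_mem_erase hv, ?_, by simp; omega, hval v hv⟩
    intro hwA
    apply hwmem
    rw [hA', Finset.mem_erase]
    refine ⟨?_, hwA⟩
    intro hx
    have : (v:ℕ)-1 = n-2 := by
      have := congrArg Fin.val hx
      simpa [ht_def] using this
    have := hval v hv
    omega
  have hdc : ∀ d : ℕ, ∀ (j : ℕ) (hj : j < n - 1), ∀ v : Fin (n-1), v ∈ A' →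
      (v:ℕ) = j + d → (⟨j, hj⟩ : Fin (n-1)) ∈ A' := by
    intro d
    induction d with
    | zero =>
      intro j hj v hv hval0
      have h : v = ⟨j, hj⟩ := Fin.ext (by simp; omega)
      exact h ▸ hv
    | succ d ihd =>
      intro j hj v hv hval0
      have hj1 : j + 1 < n - 1 := by have := v.2; omega
      have h1 := ihd (j+1) hj1 v hv (by omega)
      have h2 := hno ⟨j+1, hj1⟩ h1 (by simp) (by omega)
      have he : (⟨((⟨j+1, hj1⟩ : Fin (n-1)) : ℕ)-1, by omega⟩ : Fin (n-1)) = ⟨j, hj⟩ :=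
        Fin.ext (by simp)
      exact he ▸ h2
  apply hne
  ext u
  rw [mem_iseg]
  constructor
  · intro hu
    have hsub : iseg n ((u:ℕ)+1) ⊆ A' := by
      intro x hx
      rw [mem_iseg] at hx
      have := hdc ((u:ℕ) - (x:ℕ)) (x:ℕ) x.2 u hu (by omega)
      simpa using this
    have hcard := Finset.card_le_card hsub
    rw [iseg_card (by have := u.2; omega)] at hcard
    omega
  · intro hu
    by_contra hnotin
    have hsub : A' ⊆ iseg n (u:ℕ) := by
      intro x hx
      rw [mem_iseg]
      by_contra hge
      have h1 : (⟨(u:ℕ), u.2⟩ : Fin (n-1)) ∈ A' :=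
        hdc ((x:ℕ)-(u:ℕ)) (u:ℕ) u.2 x hx (by omega)
      exact hnotin (by simpa using h1)
    have hcard := Finset.card_le_card hsub
    rw [iseg_card (by have := u.2; omega)] at hcard
    omega

end ConnSec


section DescendSec

variable {n k : ℕ}

lemma descend (hn : 3 ≤ n) (hk2 : k ≤ n-2) :
    ∀ m : ℕ, ∀ A T : Idx n k, (∑ v ∈ A.1, (v:ℕ)) = m →
      T.1 = (if tfin n hn ∈ A.1 then insert (tfin n hn) (iseg n (k-1)) else iseg n k) →
      MUnit A T ∈ Alg n k ∧ MUnit T A ∈ Alg n k := by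
  intro m
  induction m using Nat.strong_induction_on with
  | _ m ih =>
    intro A T hm hT
    by_cases hAT : A = T
    · subst hAT
      exact ⟨MUnit_diag_mem hn A, MUnit_diag_mem hn A⟩
    · have hne : A.1.erase (tfin n hn) ≠ iseg n ((A.1.erase (tfin n hn)).card) := by
        intro heq
        apply hAT
        apply Subtype.ext
        by_cases ht : tfin n hn ∈ A.1
        · have hcard : (A.1.erase (tfin n hn)).card = k - 1 := by
            rw [Finset.card_erase_of_mem ht, A.2]
          calc A.1 = insert (tfin n hn) (A.1.erase (tfin n hn)) :=
                (Finset.insert_erase ht).symm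
            _ = insert (tfin n hn) (iseg n (k-1)) := by rw [heq, hcard]
            _ = T.1 := by rw [hT, if_pos ht]
        · have hcard : (A.1.erase (tfin n hn)).card = k := by
            rw [Finset.erase_eq_of_notMem ht, A.2]
          calc A.1 = A.1.erase (tfin n hn) := (Finset.erase_eq_of_notMem ht).symm
            _ = iseg n k := by rw [heq, hcard]
            _ = T.1 := by rw [hT, if_neg ht]
      obtain ⟨v, w, hv, hw, hwv, hvlt⟩ := gap_exists hn hne
      have hwe : w ∉ A.1.erase v := fun hx => hw (Finset.mem_of_mem_erase hx)
      have hcard : (insert w (A.1.erase v)).card = k := by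
        rw [Finset.card_insert_of_notMem hwe, Finset.card_erase_of_mem hv]
        have hA2 := A.2
        have hA1 : 1 ≤ A.1.card := Finset.card_pos.mpr ⟨v, hv⟩
        omega
      set A' : Idx n k := ⟨insert w (A.1.erase v), hcard⟩ with hA'
      have hdown : moveDown n ((v:ℕ)+1) A.1 A'.1 :=
        (moveDown_iff v w rfl (by omega)).mpr ⟨hv, hw, rfl⟩
      have hup : moveUp n (((v:ℕ)+1)-1) A'.1 A.1 := moveDown_inv hdown
      have e1 : MUnit A A' ∈ Alg n k := MUnit_down_mem hn (by omega) (by omega) hdown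
      have e2 : MUnit A' A ∈ Alg n k := MUnit_up_mem hn (by omega) (by omega) hup
      have h1 : (v:ℕ) + ∑ x ∈ A.1.erase v, (x:ℕ) = m := by
        rw [← hm]
        exact Finset.add_sum_erase _ _ hv
      have h2 : (∑ x ∈ A'.1, (x:ℕ)) = (w:ℕ) + ∑ x ∈ A.1.erase v, (x:ℕ) :=
        Finset.sum_insert hwe
      have htmem : (tfin n hn ∈ A'.1) = (tfin n hn ∈ A.1) := by
        apply propext
        constructor
        · intro hx
          rcases Finset.mem_insert.mp hx with h | h
          · exfalso
            have : n - 2 = (w:ℕ) := congrArg Fin.val h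
            omega
          · exact Finset.mem_of_mem_erase h
        · intro hx
          apply Finset.mem_insert_of_mem
          apply Finset.mem_erase.mpr
          refine ⟨?_, hx⟩
          intro hx2
          have : n - 2 = (v:ℕ) := congrArg Fin.val hx2
          omega
      have hT' : T.1 = (if tfin n hn ∈ A'.1 then insert (tfin n hn) (iseg n (k-1))
          else iseg n k) := by
        rw [hT]
        simp only [htmem]
      obtain ⟨f1, f2⟩ := ih (m-1) (by omega) A' T (by omega) hT'
      constructor
      · rw [← MUnit_mul_MUnit A A' T]
        exact Subalgebra.mul_mem _ e1 f1
      · rw [← MUnit_mul_MUnit T A' A]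
        exact Subalgebra.mul_mem _ f2 e2

lemma MUnit_all (hn : 3 ≤ n) (hk1 : 1 ≤ k) (hk2 : k ≤ n-2) (A B : Idx n k)
    (hallow : tfin n hn ∈ A.1 → tfin n hn ∈ B.1) : MUnit A B ∈ Alg n k := by
  have hcW : (iseg n k).card = k := iseg_card (by omega)
  have htiseg : ∀ c, c ≤ n-2 → tfin n hn ∉ iseg n c := by
    intro c hc hx
    rw [mem_iseg] at hx
    simp only [tfin_val] at hx
    omega
  have hcQ : (insert (tfin n hn) (iseg n (k-1))).card = k := by
    rw [Finset.card_insert_of_notMem (htiseg (k-1) (by omega)), iseg_card (by omega)]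
    omega
  set TW : Idx n k := ⟨iseg n k, hcW⟩ with hTW
  set TQ : Idx n k := ⟨insert (tfin n hn) (iseg n (k-1)), hcQ⟩ with hTQ
  have hslt : n - 3 < n - 1 := by omega
  set s : Fin (n-1) := ⟨n-3, hslt⟩ with hs
  have hsnotin : s ∉ iseg n (k-1) := by
    rw [mem_iseg]
    simp only [hs]
    omega
  have hcB : (insert s (iseg n (k-1))).card = k := by
    rw [Finset.card_insert_of_notMem hsnotin, iseg_card (by omega)]
    omega
  set Bst : Idx n k := ⟨insert s (iseg n (k-1)), hcB⟩ with hBst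
  have htBst : tfin n hn ∉ Bst.1 := by
    intro hx
    rcases Finset.mem_insert.mp hx with h | h
    · have : n - 2 = n - 3 := congrArg Fin.val h
      omega
    · exact htiseg (k-1) (by omega) h
  have hbridgemove : moveUp n (n-2) Bst.1 TQ.1 := by
    rw [moveUp_iff s (tfin n hn) (by show n-3+1 = n-2; omega) (by simp)]
    refine ⟨Finset.mem_insert_self _ _, htBst, ?_⟩
    rw [show (Bst.1).erase s = iseg n (k-1) from Finset.erase_insert hsnotin]
  have hbridge : MUnit Bst TQ ∈ Alg n k := MUnit_up_mem hn (by omega) (by omega) hbridgemove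
  by_cases htA : tfin n hn ∈ A.1 <;> by_cases htB : tfin n hn ∈ B.1
  · have h1 := descend hn hk2 _ A TQ rfl (by rw [if_pos htA])
    have h2 := descend hn hk2 _ B TQ rfl (by rw [if_pos htB])
    rw [← MUnit_mul_MUnit A TQ B]
    exact Subalgebra.mul_mem _ h1.1 h2.2
  · exact absurd (hallow htA) htB
  · have h1 := descend hn hk2 _ A TW rfl (by rw [if_neg htA])
    have h2 := descend hn hk2 _ Bst TW rfl (by rw [if_neg htBst])
    have h3 := descend hn hk2 _ B TQ rfl (by rw [if_pos htB])
    rw [← MUnit_mul_MUnit A TQ B, ← MUnit_mul_MUnit A Bst TQ, ← MUnit_mul_MUnit A TW Bst]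
    exact Subalgebra.mul_mem _ (Subalgebra.mul_mem _
      (Subalgebra.mul_mem _ h1.1 h2.2) hbridge) h3.2
  · have h1 := descend hn hk2 _ A TW rfl (by rw [if_neg htA])
    have h2 := descend hn hk2 _ B TW rfl (by rw [if_neg htB])
    rw [← MUnit_mul_MUnit A TW B]
    exact Subalgebra.mul_mem _ h1.1 h2.2

end DescendSec


section VecSec

variable {n k : ℕ}

/-- Standard basis vector. -/
def dvec (A : Idx n k) : Idx n k → ℂ := fun X => if X = A then 1 else 0

lemma mulVec_apply (M : Matrix (Idx n k) (Idx n k) ℂ) (x : Idx n k → ℂ) (A : Idx n k) :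
    M.mulVec x A = ∑ B, M A B * x B := by
  simp [Matrix.mulVec, dotProduct]

lemma MUnit_mulVec (A B : Idx n k) (x : Idx n k → ℂ) :
    (MUnit A B).mulVec x = x B • dvec A := by
  funext X
  rw [mulVec_apply]
  have huniq : ∀ Y : Idx n k, MUnit A B X Y * x Y ≠ 0 → Y = B := by
    intro Y hY
    by_cases h : X = A ∧ Y = B
    · exact h.2
    · simp [MUnit, h] at hY
  rw [sum_eq_single_idx B huniq]
  simp only [MUnit, Matrix.of_apply, Pi.smul_apply, dvec, smul_eq_mul]
  by_cases hX : X = A <;> simp [hX] <;> ring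

lemma dvec_sum (x : Idx n k → ℂ) : x = ∑ A, x A • dvec A := by
  funext X
  rw [Finset.sum_apply]
  have huniq : ∀ A : Idx n k, (x A • dvec A) X ≠ 0 → A = X := by
    intro A hA
    by_cases h : X = A
    · exact h.symm
    · simp [dvec, h] at hA
  rw [sum_eq_single_idx X huniq]
  simp [dvec]

lemma mem_Wsub {x : Idx n k → ℂ} :
    x ∈ Wsub n k ↔ ∀ A : Idx n k, memI n (n-1) A.1 → x A = 0 := Iff.rfl

lemma memI_top (hn : 3 ≤ n) {A : Finset (Fin (n-1))} :
    memI n (n-1) A ↔ tfin n hn ∈ A :=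
  memI_iff (tfin n hn) (by simp; omega)

lemma invariant_closure {U : Submodule ℂ (Idx n k → ℂ)} (hU : RestrInvariant n k U) :
    ∀ M ∈ Alg n k, ∀ x ∈ U, M.mulVec x ∈ U := by
  have hT : Alg n k ≤
      { carrier := {M : Matrix (Idx n k) (Idx n k) ℂ | ∀ x ∈ U, M.mulVec x ∈ U}
        mul_mem' := fun {a b} ha hb x hx => by
          rw [← Matrix.mulVec_mulVec]
          exact ha _ (hb x hx)
        add_mem' := fun {a b} ha hb x hx => by
          rw [Matrix.add_mulVec]
          exact U.add_mem (ha x hx) (hb x hx)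
        algebraMap_mem' := fun c x hx => by
          rw [Algebra.algebraMap_eq_smul_one, Matrix.smul_mulVec, Matrix.one_mulVec]
          exact U.smul_mem c hx
        one_mem' := fun x hx => by rw [Matrix.one_mulVec]; exact hx
        zero_mem' := fun x hx => by rw [Matrix.zero_mulVec]; exact U.zero_mem } := by
    apply Algebra.adjoin_le
    rintro M ⟨i, h1, h2, (rfl | rfl)⟩
    · exact fun x hx => (hU i h1 h2 x hx).1
    · exact fun x hx => (hU i h1 h2 x hx).2
  exact fun M hM x hx => hT hM x hx

lemma reach (hn : 3 ≤ n) (hk1 : 1 ≤ k) (hk2 : k ≤ n-2)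
    {U : Submodule ℂ (Idx n k → ℂ)} (hU : RestrInvariant n k U)
    {x : Idx n k → ℂ} (hx : x ∈ U) {A0 : Idx n k} (hA0 : x A0 ≠ 0) {B : Idx n k}
    (hallow : tfin n hn ∈ B.1 → tfin n hn ∈ A0.1) : dvec B ∈ U := by
  have h1 := invariant_closure hU (MUnit B A0) (MUnit_all hn hk1 hk2 B A0 hallow) x hx
  rw [MUnit_mulVec] at h1
  have h2 := U.smul_mem (x A0)⁻¹ h1
  rwa [smul_smul, inv_mul_cancel₀ hA0, one_smul] at h2

lemma move_preserves_top (hn : 3 ≤ n) {i : ℕ} (h2 : i ≤ n-2) {A B : Finset (Fin (n-1))}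
    (h : moveUp n i A B ∨ moveDown n i A B) (ht : tfin n hn ∈ A) : tfin n hn ∈ B := by
  rcases h with h | h
  · obtain ⟨a, b, ha, hb, haA, hbA, hB⟩ := moveUp_elim h
    have hta : tfin n hn ≠ a := by
      intro hx
      have := congrArg Fin.val hx
      simp at this
      omega
    rw [hB]
    exact Finset.mem_insert_of_mem (Finset.mem_erase.mpr ⟨hta, ht⟩)
  · obtain ⟨a, c, ha, hc, haA, hcA, hB⟩ := moveDown_elim h
    have hta : tfin n hn ≠ a := by
      intro hx
      have := congrArg Fin.val hx
      simp at this
      omega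
    rw [hB]
    exact Finset.mem_insert_of_mem (Finset.mem_erase.mpr ⟨hta, ht⟩)

lemma Wsub_invariant (hn : 3 ≤ n) : RestrInvariant n k (Wsub n k) := by
  intro i h1 h2 x hx
  constructor
  · rw [mem_Wsub]
    intro A hA
    have ht : tfin n hn ∈ A.1 := (memI_top hn).mp hA
    rw [mulVec_apply]
    apply Finset.sum_eq_zero
    intro B _
    by_cases hAB : A = B
    · subst hAB
      rw [mem_Wsub.mp hx A hA, mul_zero]
    · by_cases hm : moveUp n i A.1 B.1 ∨ moveDown n i A.1 B.1
      · have hxB : x B = 0 :=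
          mem_Wsub.mp hx B ((memI_top hn).mpr (move_preserves_top hn h2 hm ht))
        rw [hxB, mul_zero]
      · have : SM n k i A B = 0 := by simp [SM, hAB, hm]
        rw [this, zero_mul]
  · rw [mem_Wsub]
    intro A hA
    have ht : tfin n hn ∈ A.1 := (memI_top hn).mp hA
    rw [mulVec_apply]
    apply Finset.sum_eq_zero
    intro B _
    by_cases hm : moveUp n i A.1 B.1 ∨ moveDown n i A.1 B.1
    · have hxB : x B = 0 :=
        mem_Wsub.mp hx B ((memI_top hn).mpr (move_preserves_top hn h2 hm ht))
      rw [hxB, mul_zero]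
    · push_neg at hm
      have : EM n k i A B = 0 := by simp [EM, hm.1, hm.2]
      rw [this, zero_mul]

end VecSec


section FinalSec

variable {n k : ℕ}

lemma mul_MUnit_entry (X : Matrix (Idx n k) (Idx n k) ℂ) (C D A B : Idx n k) :
    (X * MUnit C D) A B = if B = D then X A C else 0 := by
  rw [Matrix.mul_apply]
  by_cases hBD : B = D
  · subst hBD
    have huniq : ∀ Z : Idx n k, X A Z * MUnit C B Z B ≠ 0 → Z = C := by
      intro Z hZ
      simp [MUnit] at hZ
      exact hZ.1
    rw [sum_eq_single_idx C huniq]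
    simp [MUnit]
  · rw [if_neg hBD]
    apply Finset.sum_eq_zero
    intro Z _
    have : ¬ (Z = C ∧ B = D) := fun h => hBD h.2
    simp [MUnit, this]

lemma MUnit_mul_entry (C D : Idx n k) (X : Matrix (Idx n k) (Idx n k) ℂ) (A B : Idx n k) :
    (MUnit C D * X) A B = if A = C then X D B else 0 := by
  rw [Matrix.mul_apply]
  by_cases hAC : A = C
  · subst hAC
    have huniq : ∀ Z : Idx n k, MUnit A D A Z * X Z B ≠ 0 → Z = D := by
      intro Z hZ
      simp [MUnit] at hZ
      exact hZ.1
    rw [sum_eq_single_idx D huniq]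
    simp [MUnit]
  · rw [if_neg hAC]
    apply Finset.sum_eq_zero
    intro Z _
    have : ¬ (A = C ∧ Z = D) := fun h => hAC h.1
    simp [MUnit, this]

/-- The canonical index avoiding the top label. -/
def TWidx (n k : ℕ) (h : k ≤ n-1) : Idx n k := ⟨iseg n k, iseg_card h⟩

lemma tfin_notmem_iseg (hn : 3 ≤ n) {c : ℕ} (hc : c ≤ n-2) :
    tfin n hn ∉ iseg n c := by
  intro hx
  rw [mem_iseg] at hx
  simp only [tfin_val] at hx
  omega

lemma TQcard (hn : 3 ≤ n) (hk1 : 1 ≤ k) (hk2 : k ≤ n-2) :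
    (insert (tfin n hn) (iseg n (k-1))).card = k := by
  rw [Finset.card_insert_of_notMem (tfin_notmem_iseg hn (by omega)), iseg_card (by omega)]
  omega

/-- The canonical index containing the top label. -/
def TQidx (n k : ℕ) (hn : 3 ≤ n) (hk1 : 1 ≤ k) (hk2 : k ≤ n-2) : Idx n k :=
  ⟨insert (tfin n hn) (iseg n (k-1)), TQcard hn hk1 hk2⟩

lemma Wsub_ne_bot (hn : 3 ≤ n) (hk2 : k ≤ n-2) : Wsub n k ≠ ⊥ := by
  intro h
  have hmem : dvec (TWidx n k (by omega)) ∈ Wsub n k := by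
    rw [mem_Wsub]
    intro A hA
    have htA : tfin n hn ∈ A.1 := (memI_top hn).mp hA
    have hne : A ≠ TWidx n k (by omega) := by
      intro he
      rw [he] at htA
      exact tfin_notmem_iseg hn hk2 htA
    simp [dvec, hne]
  rw [h, Submodule.mem_bot] at hmem
  have := congrFun hmem (TWidx n k (by omega))
  simp [dvec] at this

lemma Wsub_ne_top (hn : 3 ≤ n) (hk1 : 1 ≤ k) (hk2 : k ≤ n-2) : Wsub n k ≠ ⊤ := by
  intro h
  have hmem : dvec (TQidx n k hn hk1 hk2) ∈ Wsub n k := by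
    rw [h]
    exact Submodule.mem_top
  have h2 := mem_Wsub.mp hmem (TQidx n k hn hk1 hk2)
    ((memI_top hn).mpr (Finset.mem_insert_self _ _))
  simp [dvec] at h2

lemma trichotomy (hn : 3 ≤ n) (hk1 : 1 ≤ k) (hk2 : k ≤ n - 2)
    {U : Submodule ℂ (Idx n k → ℂ)} (hU : RestrInvariant n k U) :
    U = ⊥ ∨ U = Wsub n k ∨ U = ⊤ := by
  by_cases hbot : U = ⊥
  · exact Or.inl hbot
  obtain ⟨x, hxU, hxne⟩ := (Submodule.ne_bot_iff U).mp hbot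
  by_cases hle : U ≤ Wsub n k
  · right; left
    refine le_antisymm hle ?_
    obtain ⟨A0, hA0⟩ : ∃ A0, x A0 ≠ 0 := by
      by_contra hc
      push_neg at hc
      exact hxne (funext hc)
    intro w hw
    rw [dvec_sum w]
    apply Submodule.sum_mem
    intro B _
    by_cases htB : tfin n hn ∈ B.1
    · have hz : w B = 0 := mem_Wsub.mp hw B ((memI_top hn).mpr htB)
      rw [hz, zero_smul]
      exact U.zero_mem
    · exact U.smul_mem _ (reach hn hk1 hk2 hU hxU hA0 (fun ht => absurd ht htB))
  · right; right
    rw [SetLike.not_le_iff_exists] at hle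
    obtain ⟨y, hyU, hyW⟩ := hle
    obtain ⟨A0, hA0mem, hA0⟩ : ∃ A0 : Idx n k, memI n (n-1) A0.1 ∧ y A0 ≠ 0 := by
      by_contra hc
      push_neg at hc
      exact hyW (mem_Wsub.mpr (fun A hA => hc A hA))
    rw [eq_top_iff]
    intro z _
    rw [dvec_sum z]
    apply Submodule.sum_mem
    intro B _
    exact U.smul_mem _ (reach hn hk1 hk2 hU hyU hA0 (fun _ => (memI_top hn).mp hA0mem))

lemma commutant_scalar (hn : 3 ≤ n) (hk1 : 1 ≤ k) (hk2 : k ≤ n - 2)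
    (X : Matrix (Idx n k) (Idx n k) ℂ)
    (hX : ∀ i : ℕ, 1 ≤ i → i ≤ n - 2 →
      X * SM n k i = SM n k i * X ∧ X * EM n k i = EM n k i * X) :
    ∃ c : ℂ, X = c • (1 : Matrix (Idx n k) (Idx n k) ℂ) := by
  have hcomm : ∀ M ∈ Alg n k, X * M = M * X := by
    intro M hM
    have hle : Alg n k ≤ Subalgebra.centralizer ℂ {X} := by
      apply Algebra.adjoin_le
      rintro M ⟨i, h1, h2, (rfl | rfl)⟩ <;>
        rw [SetLike.mem_coe, Subalgebra.mem_centralizer_iff] <;>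
        intro y hy <;> rw [Set.mem_singleton_iff] at hy <;> subst hy
      · exact (hX i h1 h2).1
      · exact (hX i h1 h2).2
    exact (Subalgebra.mem_centralizer_iff ℂ).mp (hle hM) X rfl
  set TW : Idx n k := TWidx n k (by omega) with hTW
  have htTW : tfin n hn ∉ TW.1 := tfin_notmem_iseg hn hk2
  have hdiag : ∀ A B : Idx n k, A ≠ B → X A B = 0 := by
    intro A B hAB
    have h := hcomm (MUnit B B) (MUnit_diag_mem hn B)
    have h2 : (X * MUnit B B) A B = (MUnit B B * X) A B := by rw [h]
    rw [mul_MUnit_entry, MUnit_mul_entry, if_pos rfl, if_neg hAB] at h2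
    exact h2
  have hsc : ∀ B : Idx n k, X B B = X TW TW := by
    intro B
    have h := hcomm (MUnit TW B) (MUnit_all hn hk1 hk2 TW B (fun ht => absurd ht htTW))
    have h2 : (X * MUnit TW B) TW B = (MUnit TW B * X) TW B := by rw [h]
    rw [mul_MUnit_entry, MUnit_mul_entry, if_pos rfl, if_pos rfl] at h2
    exact h2.symm
  refine ⟨X TW TW, ?_⟩
  ext A B
  by_cases hAB : A = B
  · subst hAB
    simp [Matrix.smul_apply, Matrix.one_apply, hsc A]
  · simp [Matrix.smul_apply, Matrix.one_apply_ne hAB, hdiag A B hAB, hAB]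

lemma card_Idx : Fintype.card (Idx n k) = (n-1).choose k := by
  have e : Idx n k ≃ {S // S ∈ (Finset.univ : Finset (Fin (n-1))).powersetCard k} :=
    { toFun := fun A => ⟨A.1, Finset.mem_powersetCard.mpr ⟨Finset.subset_univ _, A.2⟩⟩
      invFun := fun S => ⟨S.1, (Finset.mem_powersetCard.mp S.2).2⟩
      left_inv := fun A => rfl
      right_inv := fun S => rfl }
  rw [Fintype.card_congr e, Fintype.card_coe, Finset.card_powersetCard, Finset.card_univ,
    Fintype.card_fin]

lemma card_Wtype (hn : 3 ≤ n) :
    Fintype.card {A : Idx n k // tfin n hn ∉ A.1} = (n-2).choose k := by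
  have e : {A : Idx n k // tfin n hn ∉ A.1} ≃
      {S // S ∈ ((Finset.univ : Finset (Fin (n-1))).erase (tfin n hn)).powersetCard k} :=
    { toFun := fun A => ⟨A.1.1, Finset.mem_powersetCard.mpr
        ⟨fun v hv => Finset.mem_erase.mpr ⟨fun he => A.2 (he ▸ hv), Finset.mem_univ v⟩, A.1.2⟩⟩
      invFun := fun S => ⟨⟨S.1, (Finset.mem_powersetCard.mp S.2).2⟩,
        fun ht => (Finset.mem_erase.mp ((Finset.mem_powersetCard.mp S.2).1 ht)).1 rfl⟩
      left_inv := fun A => rfl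
      right_inv := fun S => rfl }
  rw [Fintype.card_congr e, Fintype.card_coe, Finset.card_powersetCard]
  congr 1
  rw [Finset.card_erase_of_mem (Finset.mem_univ _), Finset.card_univ, Fintype.card_fin]
  omega

lemma finrank_Wsub (hn : 3 ≤ n) :
    Module.finrank ℂ (Wsub n k) = (n-2).choose k := by
  have hmemd : ∀ (y : {A : Idx n k // tfin n hn ∉ A.1} → ℂ),
      (fun A : Idx n k => if h : tfin n hn ∈ A.1 then 0 else y ⟨A, h⟩) ∈ Wsub n k := by
    intro y
    rw [mem_Wsub]
    intro A hA
    rw [dif_pos ((memI_top hn).mp hA)]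
  let e : Wsub n k ≃ₗ[ℂ] ({A : Idx n k // tfin n hn ∉ A.1} → ℂ) :=
    { toFun := fun x A => x.1 A.1
      map_add' := fun x y => rfl
      map_smul' := fun c x => rfl
      invFun := fun y => ⟨fun A => if h : tfin n hn ∈ A.1 then 0 else y ⟨A, h⟩, hmemd y⟩
      left_inv := fun x => by
        apply Subtype.ext
        funext A
        by_cases h : tfin n hn ∈ A.1
        · simp only [dif_pos h]
          exact (mem_Wsub.mp x.2 A ((memI_top hn).mpr h)).symm
        · simp only [dif_neg h]
      right_inv := fun y => by
        funext A
        simp only [dif_neg A.2] }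
  rw [e.finrank_eq, Module.finrank_fintype_fun_eq_card, card_Wtype hn]

lemma finrank_quot (hn : 3 ≤ n) (hk1 : 1 ≤ k) (hk2 : k ≤ n-2) :
    Module.finrank ℂ ((Idx n k → ℂ) ⧸ Wsub n k) = (n-2).choose (k-1) := by
  have h := Submodule.finrank_quotient_add_finrank (Wsub n k)
  have htot : Module.finrank ℂ (Idx n k → ℂ) = (n-1).choose k := by
    rw [Module.finrank_fintype_fun_eq_card, card_Idx]
  have hW := finrank_Wsub (n:=n) (k:=k) hn
  have hpascal : (n-1).choose k = (n-2).choose (k-1) + (n-2).choose k := by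
    have h1 : n - 1 = (n-2) + 1 := by omega
    have h2 : k = (k-1) + 1 := by omega
    rw [h1, h2, Nat.choose_succ_succ, Nat.succ_eq_add_one, ← h2]
  omega

end FinalSec

/-- Let `n ≥ 3`, `1 ≤ k ≤ n-2`.  For the restriction of `C₀(Λᵏ V_n)` to
`A_{n-1}`:
(a) every matrix commuting with all `S_i, E_i` (`1 ≤ i ≤ n-2`) is scalar, so the restriction
is indecomposable;
(b) `W` is invariant of dimension `binom(n-2,k)`, the quotient has dimension
`binom(n-2,k-1)`, and both `W` and the quotient are irreducible (no invariant subspace lies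
strictly between `⊥` and `W`, nor strictly between `W` and `⊤`);
(c) `W` has no invariant complement, i.e. the short exact sequence is non-split. -/
theorem restriction_structure (n k : ℕ) (hn : 3 ≤ n) (hk1 : 1 ≤ k) (hk2 : k ≤ n - 2) :
    -- (a) the commutant is ℂ, hence the restriction is indecomposable
    ((∀ X : Matrix (Idx n k) (Idx n k) ℂ,
        (∀ i : ℕ, 1 ≤ i → i ≤ n - 2 →
          X * SM n k i = SM n k i * X ∧ X * EM n k i = EM n k i * X) →
        ∃ c : ℂ, X = c • (1 : Matrix (Idx n k) (Idx n k) ℂ)) ∧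
      ¬ ∃ U V : Submodule ℂ (Idx n k → ℂ), U ≠ ⊥ ∧ V ≠ ⊥ ∧ IsCompl U V ∧
          RestrInvariant n k U ∧ RestrInvariant n k V) ∧
    -- (b) the invariant subspace W and the two composition factors
    (RestrInvariant n k (Wsub n k) ∧
      Module.finrank ℂ (Wsub n k) = Nat.choose (n-2) k ∧
      Module.finrank ℂ ((Idx n k → ℂ) ⧸ Wsub n k) = Nat.choose (n-2) (k-1) ∧
      (∀ U : Submodule ℂ (Idx n k → ℂ), U ≤ Wsub n k → RestrInvariant n k U →
        U = ⊥ ∨ U = Wsub n k) ∧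
      (∀ U : Submodule ℂ (Idx n k → ℂ), Wsub n k ≤ U → RestrInvariant n k U →
        U = Wsub n k ∨ U = ⊤)) ∧
    -- (c) non-splitness
    ¬ ∃ U : Submodule ℂ (Idx n k → ℂ), RestrInvariant n k U ∧ IsCompl (Wsub n k) U := by
  have hWinv := Wsub_invariant (n:=n) (k:=k) hn
  have hWb := Wsub_ne_bot (n:=n) (k:=k) hn hk2
  have hWt := Wsub_ne_top (n:=n) (k:=k) hn hk1 hk2
  refine ⟨⟨commutant_scalar hn hk1 hk2, ?_⟩,
    ⟨hWinv, finrank_Wsub hn, finrank_quot hn hk1 hk2, ?_, ?_⟩, ?_⟩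
  · rintro ⟨U, V, hU0, hV0, hcpl, hUinv, hVinv⟩
    have hdis := hcpl.disjoint
    rw [disjoint_iff] at hdis
    rcases trichotomy hn hk1 hk2 hUinv with rfl | rfl | rfl
    · exact hU0 rfl
    · rcases trichotomy hn hk1 hk2 hVinv with rfl | rfl | rfl
      · exact hV0 rfl
      · rw [inf_idem] at hdis
        exact hWb hdis
      · rw [inf_top_eq] at hdis
        exact hWb hdis
    · rcases trichotomy hn hk1 hk2 hVinv with rfl | rfl | rfl
      · exact hV0 rfl
      · rw [top_inf_eq] at hdis
        exact hWb hdis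
      · rw [top_inf_eq] at hdis
        exact hWb (le_bot_iff.mp (hdis ▸ le_top))
  · intro U hle hUinv
    rcases trichotomy hn hk1 hk2 hUinv with rfl | rfl | rfl
    · exact Or.inl rfl
    · exact Or.inr rfl
    · exact absurd (top_le_iff.mp hle) hWt
  · intro U hle hUinv
    rcases trichotomy hn hk1 hk2 hUinv with rfl | rfl | rfl
    · exact absurd (le_bot_iff.mp hle) hWb
    · exact Or.inl rfl
    · exact Or.inr rfl
  · rintro ⟨U, hUinv, hcpl⟩
    have hdis := hcpl.disjoint
    rw [disjoint_iff] at hdis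
    have hcod := hcpl.codisjoint
    rw [codisjoint_iff] at hcod
    rcases trichotomy hn hk1 hk2 hUinv with rfl | rfl | rfl
    · rw [sup_bot_eq] at hcod
      exact hWt hcod
    · rw [inf_idem] at hdis
      exact hWb hdis
    · rw [inf_top_eq] at hdis
      exact hWb hdis

end Periplectic
end
end
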